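/- arXiv:2106.13031 — 6 statements merged into one kernel-verified Lean document; each statement's English description precedes it below -/
import Mathlib

section
/- At any stationary point (w_1*,…,w_N*) of the weight-sharing objective L (i.e., a point where all partial gradients ∂L/∂w_i vanish), the mean weight is preserved: (1/N) Σ_{i=1}^N w_i* = (1/N) Σ_{i=1}^N w_i^init. -/
open scoped RealInnerProductSpace BigOperators

private lemma quad_deriv_sq {D E : ℝ} :
    HasDerivAt (fun t : ℝ => (D + E * t) ^ 2) (2 * D * E) 0 := by
  have hb : HasDerivAt (fun t : ℝ => D + E * t) E 0 := by
    simpa using ((hasDerivAt_id' (x := (0:ℝ))).const_mul E).const_add D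
  simpa using hb.fun_pow 2

private lemma quad_deriv_poly {A B C : ℝ} :
    HasDerivAt (fun t : ℝ => A + B * t + C * t ^ 2) B 0 := by
  have h1 : HasDerivAt (fun t : ℝ => A + B * t) B 0 := by
    simpa using ((hasDerivAt_id' (x := (0:ℝ))).const_mul B).const_add A
  have h2 : HasDerivAt (fun t : ℝ => C * t ^ 2) 0 0 := by
    simpa using (hasDerivAt_pow 2 (0:ℝ)).const_mul C
  simpa using h1.fun_add h2

/-- At any stationary point of the weight-sharing objective `L` (a point where all partial
gradients `∂L/∂wᵢ` vanish), the mean weight equals the mean initial weight. -/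
theorem weight_sharing_stationary_point_preserves_mean
    (N M k : ℕ) (hN : 1 ≤ N) (hM : 1 ≤ M)
    (x : Fin M → EuclideanSpace ℝ (Fin k))
    (winit : Fin N → EuclideanSpace ℝ (Fin k))
    (γ : ℝ) (hγ : 0 < γ)
    (L : (Fin N → EuclideanSpace ℝ (Fin k)) → ℝ)
    (hL : ∀ w, L w =
        (1 / (4 * (M : ℝ) * (N : ℝ))) *
          ∑ m : Fin M, ∑ i : Fin N, ∑ j : Fin N,
            (⟪w i, x m⟫ - ⟪w j, x m⟫) ^ 2
        + (γ / 2) * ∑ i : Fin N, ‖w i - winit i‖ ^ 2)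
    (wstar : Fin N → EuclideanSpace ℝ (Fin k))
    (hstat : ∀ i, gradient (fun v => L (Function.update wstar i v)) (wstar i) = 0) :
    (N : ℝ)⁻¹ • ∑ i : Fin N, wstar i = (N : ℝ)⁻¹ • ∑ i : Fin N, winit i := by
  classical
  -- the key vector identity at each stationary coordinate
  have key : ∀ i : Fin N,
      (1 / (4 * (M : ℝ) * (N : ℝ))) •
          (∑ m : Fin M, ∑ j : Fin N,
            (4 * (⟪wstar i, x m⟫ - ⟪wstar j, x m⟫)) • x m)
        + γ • (wstar i - winit i) = 0 := by
    intro i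
    have h0 : fderiv ℝ (fun v => L (Function.update wstar i v)) (wstar i) = 0 := by
      have h := hstat i
      unfold gradient at h
      rwa [LinearIsometryEquiv.map_eq_zero_iff] at h
    have dupd : ∀ a : Fin N, DifferentiableAt ℝ
        (fun v : EuclideanSpace ℝ (Fin k) => Function.update wstar i v a) (wstar i) := by
      intro a
      rcases eq_or_ne a i with h | h
      · subst h
        simp only [Function.update_self]
        exact differentiableAt_fun_id
      · simp only [Function.update_of_ne h]
        exact differentiableAt_const _
    have hFdiff : DifferentiableAt ℝ (fun v => L (Function.update wstar i v)) (wstar i) := by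
      simp only [hL]
      apply DifferentiableAt.add
      · refine DifferentiableAt.const_mul ?_ _
        refine DifferentiableAt.fun_sum fun m _ => ?_
        refine DifferentiableAt.fun_sum fun a _ => ?_
        refine DifferentiableAt.fun_sum fun b _ => ?_
        exact (((dupd a).inner ℝ (differentiableAt_const _)).sub
          ((dupd b).inner ℝ (differentiableAt_const _))).pow 2
      · refine DifferentiableAt.const_mul ?_ _
        refine DifferentiableAt.fun_sum fun a _ => ?_
        exact ((dupd a).sub (differentiableAt_const _)).norm_sq ℝ
    -- scalar identity in every direction u
    have hkey : ∀ u : EuclideanSpace ℝ (Fin k),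
        (1 / (4 * (M : ℝ) * (N : ℝ))) *
            (∑ m : Fin M, ∑ j : Fin N,
              (4 * (⟪wstar i, x m⟫ - ⟪wstar j, x m⟫)) * ⟪x m, u⟫)
          + γ * ⟪wstar i - winit i, u⟫ = 0 := by
      intro u
      have hline : HasDerivAt (fun t : ℝ => wstar i + t • u) u 0 := by
        simpa using ((hasDerivAt_id' (x := (0:ℝ))).smul_const u).const_add (wstar i)
      have hF' : HasFDerivAt (fun v => L (Function.update wstar i v))
          (fderiv ℝ (fun v => L (Function.update wstar i v)) (wstar i))
          (wstar i + (0:ℝ) • u) := by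
        simpa using hFdiff.hasFDerivAt
      have hcomp : HasDerivAt (fun t : ℝ => L (Function.update wstar i (wstar i + t • u)))
          ((fderiv ℝ (fun v => L (Function.update wstar i v)) (wstar i)) u) 0 :=
        hF'.comp_hasDerivAt (f := fun t : ℝ => wstar i + t • u) 0 hline
      have hupd : ∀ (t : ℝ) (a : Fin N),
          Function.update wstar i (wstar i + t • u) a
            = wstar a + ((if a = i then (1:ℝ) else 0) * t) • u := by
        intro t a
        rcases eq_or_ne a i with h | h
        · subst h; simp
        · rw [Function.update_of_ne h, if_neg h]
          simp
      have hrw : (fun t : ℝ => L (Function.update wstar i (wstar i + t • u)))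
          = fun t : ℝ =>
            (1 / (4 * (M : ℝ) * (N : ℝ))) *
              ∑ m : Fin M, ∑ a : Fin N, ∑ b : Fin N,
                ((⟪wstar a, x m⟫ - ⟪wstar b, x m⟫) +
                  (((if a = i then (1:ℝ) else 0) - (if b = i then (1:ℝ) else 0)) * ⟪u, x m⟫) * t) ^ 2
            + (γ / 2) * ∑ a : Fin N,
                (‖wstar a - winit a‖ ^ 2
                  + (2 * (if a = i then (1:ℝ) else 0) * ⟪wstar a - winit a, u⟫) * t
                  + ((if a = i then (1:ℝ) else 0) ^ 2 * ‖u‖ ^ 2) * t ^ 2) := by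
        funext t
        rw [hL]
        congr 1
        · congr 1
          refine Finset.sum_congr rfl fun m _ => Finset.sum_congr rfl fun a _ =>
            Finset.sum_congr rfl fun b _ => ?_
          rw [hupd t a, hupd t b]
          simp only [inner_add_left, real_inner_smul_left]
          ring
        · congr 1
          refine Finset.sum_congr rfl fun a _ => ?_
          rw [hupd t a]
          have hre : wstar a + ((if a = i then (1:ℝ) else 0) * t) • u - winit a
              = (wstar a - winit a) + ((if a = i then (1:ℝ) else 0) * t) • u := by
            abel
          rw [hre, norm_add_sq_real, real_inner_smul_right, norm_smul, mul_pow]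
          simp only [Real.norm_eq_abs, sq_abs]
          ring
      have hder : HasDerivAt (fun t : ℝ => L (Function.update wstar i (wstar i + t • u)))
          ((1 / (4 * (M : ℝ) * (N : ℝ))) *
              ∑ m : Fin M, ∑ a : Fin N, ∑ b : Fin N,
                (2 * (⟪wstar a, x m⟫ - ⟪wstar b, x m⟫) *
                  (((if a = i then (1:ℝ) else 0) - (if b = i then (1:ℝ) else 0)) * ⟪u, x m⟫))
            + (γ / 2) * ∑ a : Fin N,
                (2 * (if a = i then (1:ℝ) else 0) * ⟪wstar a - winit a, u⟫)) 0 := by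
        rw [hrw]
        apply HasDerivAt.add
        · apply HasDerivAt.const_mul
          apply HasDerivAt.fun_sum; intro m _
          apply HasDerivAt.fun_sum; intro a _
          apply HasDerivAt.fun_sum; intro b _
          exact quad_deriv_sq
        · apply HasDerivAt.const_mul
          apply HasDerivAt.fun_sum; intro a _
          exact quad_deriv_poly
      have hB := hcomp.unique hder
      rw [h0] at hB
      simp only [ContinuousLinearMap.zero_apply] at hB
      -- simplify the sums in hB
      have eA : ∀ m : Fin M,
          (∑ a : Fin N, ∑ b : Fin N,
            (2 * (⟪wstar a, x m⟫ - ⟪wstar b, x m⟫) *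
              (((if a = i then (1:ℝ) else 0) - (if b = i then (1:ℝ) else 0)) * ⟪u, x m⟫)))
          = ∑ j : Fin N, (4 * (⟪wstar i, x m⟫ - ⟪wstar j, x m⟫)) * ⟪x m, u⟫ := by
        intro m
        have expand : ∀ a b : Fin N,
            2 * (⟪wstar a, x m⟫ - ⟪wstar b, x m⟫) *
              (((if a = i then (1:ℝ) else 0) - (if b = i then (1:ℝ) else 0)) * ⟪u, x m⟫)
            = (if a = i then 2 * (⟪wstar a, x m⟫ - ⟪wstar b, x m⟫) * ⟪x m, u⟫ else 0)
              + (if b = i then 2 * (⟪wstar b, x m⟫ - ⟪wstar a, x m⟫) * ⟪x m, u⟫ else 0) := by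
          intro a b
          rw [real_inner_comm u (x m)]
          rcases eq_or_ne a i with ha | ha <;> rcases eq_or_ne b i with hb | hb <;>
            simp [ha, hb] <;> ring
        rw [Finset.sum_congr rfl fun a _ => Finset.sum_congr rfl fun b _ => expand a b]
        have t1 : (∑ a : Fin N, ∑ b : Fin N,
            (if a = i then 2 * (⟪wstar a, x m⟫ - ⟪wstar b, x m⟫) * ⟪x m, u⟫ else 0))
            = ∑ b : Fin N, 2 * (⟪wstar i, x m⟫ - ⟪wstar b, x m⟫) * ⟪x m, u⟫ := by
          rw [Finset.sum_comm]
          refine Finset.sum_congr rfl fun b _ => ?_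
          simp
        have t2 : (∑ a : Fin N, ∑ b : Fin N,
            (if b = i then 2 * (⟪wstar b, x m⟫ - ⟪wstar a, x m⟫) * ⟪x m, u⟫ else 0))
            = ∑ a : Fin N, 2 * (⟪wstar i, x m⟫ - ⟪wstar a, x m⟫) * ⟪x m, u⟫ := by
          refine Finset.sum_congr rfl fun a _ => ?_
          simp
        simp only [Finset.sum_add_distrib]
        rw [t1, t2, ← Finset.sum_add_distrib]
        refine Finset.sum_congr rfl fun j _ => ?_
        ring
      have eB : (∑ a : Fin N,
          (2 * (if a = i then (1:ℝ) else 0) * ⟪wstar a - winit a, u⟫))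
          = 2 * ⟪wstar i - winit i, u⟫ := by
        have h2 : ∀ a : Fin N, 2 * (if a = i then (1:ℝ) else 0) * ⟪wstar a - winit a, u⟫
            = if a = i then 2 * ⟪wstar a - winit a, u⟫ else 0 := by
          intro a; split_ifs <;> ring
        rw [Finset.sum_congr rfl fun a _ => h2 a]
        simp
      rw [Finset.sum_congr rfl fun m _ => eA m, eB] at hB
      linear_combination -hB
    -- from the scalar identity to the vector identity
    set h : EuclideanSpace ℝ (Fin k) :=
      (1 / (4 * (M : ℝ) * (N : ℝ))) •
          (∑ m : Fin M, ∑ j : Fin N,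
            (4 * (⟪wstar i, x m⟫ - ⟪wstar j, x m⟫)) • x m)
        + γ • (wstar i - winit i) with hh
    have hinner : ∀ u : EuclideanSpace ℝ (Fin k), ⟪h, u⟫ = 0 := by
      intro u
      rw [hh]
      rw [inner_add_left, real_inner_smul_left, real_inner_smul_left, sum_inner]
      rw [show (∑ m : Fin M, ⟪∑ j : Fin N,
          (4 * (⟪wstar i, x m⟫ - ⟪wstar j, x m⟫)) • x m, u⟫)
        = ∑ m : Fin M, ∑ j : Fin N,
            (4 * (⟪wstar i, x m⟫ - ⟪wstar j, x m⟫)) * ⟪x m, u⟫ from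
        Finset.sum_congr rfl fun m _ => by
          rw [sum_inner]
          exact Finset.sum_congr rfl fun j _ => real_inner_smul_left _ _ _]
      exact hkey u
    have : ⟪h, h⟫ = 0 := hinner h
    rw [inner_self_eq_zero] at this
    exact this
  -- sum the key identities over i
  have hsum : (∑ i : Fin N,
      ((1 / (4 * (M : ℝ) * (N : ℝ))) •
          (∑ m : Fin M, ∑ j : Fin N,
            (4 * (⟪wstar i, x m⟫ - ⟪wstar j, x m⟫)) • x m)
        + γ • (wstar i - winit i))) = 0 := by
    simp only [key, Finset.sum_const_zero]
  have hT0 : (∑ i : Fin N, ∑ m : Fin M, ∑ j : Fin N,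
      (4 * (⟪wstar i, x m⟫ - ⟪wstar j, x m⟫)) • x m) = 0 := by
    rw [Finset.sum_comm]
    refine Finset.sum_eq_zero fun m _ => ?_
    have : (∑ i : Fin N, ∑ j : Fin N, (4 * (⟪wstar i, x m⟫ - ⟪wstar j, x m⟫)) • x m)
        = (∑ i : Fin N, ∑ j : Fin N, 4 * (⟪wstar i, x m⟫ - ⟪wstar j, x m⟫)) • x m := by
      rw [Finset.sum_smul]
      exact Finset.sum_congr rfl fun i _ => (Finset.sum_smul).symm
    rw [this]
    have hz : (∑ i : Fin N, ∑ j : Fin N, 4 * (⟪wstar i, x m⟫ - ⟪wstar j, x m⟫)) = 0 := by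
      simp only [mul_sub, Finset.sum_sub_distrib]
      rw [sub_eq_zero]
      exact Finset.sum_comm
    rw [hz, zero_smul]
  rw [Finset.sum_add_distrib, ← Finset.smul_sum, hT0, smul_zero, zero_add,
    ← Finset.smul_sum] at hsum
  have hγ' : γ ≠ 0 := ne_of_gt hγ
  have hS : (∑ i : Fin N, (wstar i - winit i)) = 0 := by
    rcases smul_eq_zero.mp hsum with h | h
    · exact absurd h hγ'
    · exact h
  rw [Finset.sum_sub_distrib, sub_eq_zero] at hS
  rw [hS]
end

section
/- The unique global minimizer (w_1*,…,w_N*) of the weight-sharing objective L is given in closed form by w_i* = (C + γ I)^{-1} (C μ^init + γ w_i^init) for every i, where C = (1/M) Σ_{m=1}^M x_m x_m^T is the input covariance matrix, μ^init = (1/N) Σ_{j=1}^N w_j^init, and I is the k×k identity matrix (note C + γI is invertible since C is positive semidefinite and γ > 0). -/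
open Matrix
open scoped BigOperators

lemma ws_pair_expand (N : ℕ) (u v : Fin N → ℝ) :
    ∑ i : Fin N, ∑ j : Fin N, (u i - u j) * (v i - v j)
      = 2*(N:ℝ)*(∑ i, u i * v i) - 2*(∑ i, u i)*(∑ i, v i) := by
  have : ∀ i j : Fin N, (u i - u j) * (v i - v j)
      = u i * v i + u j * v j - u i * v j - u j * v i := by intros; ring
  simp only [this, Finset.sum_sub_distrib, Finset.sum_add_distrib, Finset.sum_const,
    Finset.card_univ, Fintype.card_fin, ← Finset.sum_mul, ← Finset.mul_sum, nsmul_eq_mul]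
  ring

lemma ws_sumC (M k : ℕ) (x : Fin M → Fin k → ℝ) (c : ℝ) (d v : Fin k → ℝ) :
    d ⬝ᵥ ((c • ∑ m : Fin M, vecMulVec (x m) (x m)) *ᵥ v)
      = c * ∑ m : Fin M, (v ⬝ᵥ x m) * (d ⬝ᵥ x m) := by
  rw [smul_mulVec, dotProduct_smul, smul_eq_mul]
  congr 1
  simp only [mulVec, dotProduct, vecMulVec, Matrix.sum_apply, of_apply, Finset.mul_sum,
    Finset.sum_mul]
  refine Eq.trans (Finset.sum_congr rfl fun a _ => Finset.sum_comm) ?_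
  refine Eq.trans Finset.sum_comm ?_
  exact Finset.sum_congr rfl fun m _ => Finset.sum_congr rfl fun a _ =>
    Finset.sum_congr rfl fun b _ => by ring

lemma ws_sum_dotProduct {k N : ℕ} (f : Fin N → Fin k → ℝ) (x : Fin k → ℝ) :
    (∑ i : Fin N, f i) ⬝ᵥ x = ∑ i : Fin N, f i ⬝ᵥ x := by
  simp only [dotProduct, Finset.sum_apply, Finset.sum_mul]
  exact Finset.sum_comm

lemma ws_dps_nonneg {k : ℕ} (v : Fin k → ℝ) : 0 ≤ v ⬝ᵥ v :=
  Finset.sum_nonneg fun i _ => mul_self_nonneg (v i)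

/-- The unique global minimizer of the weight-sharing objective is
`wᵢ* = (C + γ I)⁻¹ (C μ^init + γ wᵢ^init)`, where `C = (1/M) Σ_m x_m x_mᵀ` and
`μ^init = (1/N) Σ_j w_j^init`. -/
theorem weight_sharing_minimizer_closed_form
    (N M k : ℕ) (hN : 1 ≤ N) (hM : 1 ≤ M)
    (x : Fin M → (Fin k → ℝ))
    (winit : Fin N → (Fin k → ℝ))
    (γ : ℝ) (hγ : 0 < γ)
    (L : (Fin N → (Fin k → ℝ)) → ℝ)
    (hL : ∀ w, L w =
        (1 / (4 * (M : ℝ) * (N : ℝ))) *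
          ∑ m : Fin M, ∑ i : Fin N, ∑ j : Fin N,
            (w i ⬝ᵥ x m - w j ⬝ᵥ x m) ^ 2
        + (γ / 2) * ∑ i : Fin N, (w i - winit i) ⬝ᵥ (w i - winit i))
    (C : Matrix (Fin k) (Fin k) ℝ)
    (hC : C = (M : ℝ)⁻¹ • ∑ m : Fin M, vecMulVec (x m) (x m))
    (μinit : Fin k → ℝ)
    (hμ : μinit = (N : ℝ)⁻¹ • ∑ j : Fin N, winit j)
    (wstar : Fin N → (Fin k → ℝ))
    (hwstar : ∀ i, wstar i = (C + γ • 1)⁻¹ *ᵥ (C *ᵥ μinit + γ • winit i)) :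
    (∀ w, L wstar ≤ L w) ∧ ∀ w, (∀ w', L w ≤ L w') → w = wstar := by
  have hNpos : (0:ℝ) < (N:ℝ) := by exact_mod_cast hN
  have hMpos : (0:ℝ) < (M:ℝ) := by exact_mod_cast hM
  -- the quadratic form of C
  have hCq : ∀ d v : Fin k → ℝ,
      d ⬝ᵥ (C *ᵥ v) = (M:ℝ)⁻¹ * ∑ m : Fin M, (v ⬝ᵥ x m) * (d ⬝ᵥ x m) := by
    intro d v; rw [hC]; exact ws_sumC M k x _ d v
  have hCpsd : ∀ v : Fin k → ℝ, 0 ≤ v ⬝ᵥ (C *ᵥ v) := by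
    intro v
    rw [hCq]
    exact mul_nonneg (by positivity)
      (Finset.sum_nonneg fun m _ => mul_self_nonneg _)
  -- (C + γ I) is injective as a linear map
  have hinj : Function.Injective ((C + γ • (1 : Matrix (Fin k) (Fin k) ℝ)).mulVec) := by
    intro u₁ u₂ h
    have h0 : (C + γ • (1 : Matrix (Fin k) (Fin k) ℝ)) *ᵥ (u₁ - u₂) = 0 := by
      rw [mulVec_sub, h, sub_self]
    have h1 : (u₁ - u₂) ⬝ᵥ ((C + γ • (1 : Matrix (Fin k) (Fin k) ℝ)) *ᵥ (u₁ - u₂)) = 0 := by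
      rw [h0, dotProduct_zero]
    rw [add_mulVec, smul_mulVec, one_mulVec, dotProduct_add, dotProduct_smul,
      smul_eq_mul] at h1
    have h2 : (u₁ - u₂) ⬝ᵥ (u₁ - u₂) = 0 := by
      have := hCpsd (u₁ - u₂)
      have := ws_dps_nonneg (u₁ - u₂)
      nlinarith
    have := dotProduct_self_eq_zero.mp h2
    exact sub_eq_zero.mp this
  have hunit : IsUnit (C + γ • (1 : Matrix (Fin k) (Fin k) ℝ)) :=
    (Matrix.mulVec_injective_iff_isUnit).1 hinj
  have hinvmul : ∀ b : Fin k → ℝ,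
      (C + γ • (1 : Matrix (Fin k) (Fin k) ℝ)) *ᵥ ((C + γ • 1)⁻¹ *ᵥ b) = b := by
    intro b
    rw [mulVec_mulVec, Matrix.mul_nonsing_inv _ ((Matrix.isUnit_iff_isUnit_det _).1 hunit),
      one_mulVec]
  -- stationarity
  have key : ∀ i, C *ᵥ wstar i + γ • wstar i = C *ᵥ μinit + γ • winit i := by
    intro i
    have h := hinvmul (C *ᵥ μinit + γ • winit i)
    rw [← hwstar i, add_mulVec, smul_mulVec, one_mulVec] at h
    exact h
  have hwinit_sum : ∑ j : Fin N, winit j = (N:ℝ) • μinit := by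
    rw [hμ, smul_smul, mul_inv_cancel₀ hNpos.ne', one_smul]
  -- the mean of wstar is μinit
  have hsum : ∑ i : Fin N, wstar i = (N:ℝ) • μinit := by
    apply hinj
    show (C + γ • 1) *ᵥ _ = (C + γ • 1) *ᵥ _
    rw [add_mulVec, add_mulVec, smul_mulVec, smul_mulVec, one_mulVec, one_mulVec]
    calc C *ᵥ (∑ i : Fin N, wstar i) + γ • (∑ i : Fin N, wstar i)
        = ∑ i : Fin N, (C *ᵥ wstar i + γ • wstar i) := by
          rw [Finset.sum_add_distrib, ← Finset.smul_sum]
          congr 1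
          exact map_sum C.mulVecLin wstar Finset.univ
      _ = ∑ i : Fin N, (C *ᵥ μinit + γ • winit i) := Finset.sum_congr rfl fun i _ => key i
      _ = C *ᵥ ((N:ℝ) • μinit) + γ • ((N:ℝ) • μinit) := by
          rw [Finset.sum_add_distrib, Finset.sum_const, Finset.card_univ, Fintype.card_fin,
            ← Finset.smul_sum, hwinit_sum, mulVec_smul]
          simp [← Nat.cast_smul_eq_nsmul (R := ℝ)]
  -- the gradient vanishes at wstar
  have hzero : ∀ i, C *ᵥ wstar i - C *ᵥ μinit + γ • (wstar i - winit i) = 0 := by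
    intro i
    calc C *ᵥ wstar i - C *ᵥ μinit + γ • (wstar i - winit i)
        = (C *ᵥ wstar i + γ • wstar i) - (C *ᵥ μinit + γ • winit i) := by
          rw [smul_sub]; abel
      _ = 0 := by rw [key i, sub_self]
  -- main decomposition
  have hdecomp : ∀ w : Fin N → (Fin k → ℝ),
      L w = L wstar
        + (1 / (4 * (M:ℝ) * (N:ℝ))) * ∑ m : Fin M, ∑ i : Fin N, ∑ j : Fin N,
            ((w i - wstar i) ⬝ᵥ x m - (w j - wstar j) ⬝ᵥ x m) ^ 2
        + (γ / 2) * ∑ i : Fin N, (w i - wstar i) ⬝ᵥ (w i - wstar i) := by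
    intro w
    set d : Fin N → (Fin k → ℝ) := fun i => w i - wstar i with hd
    have h_ab : ∀ (m : Fin M) (i : Fin N),
        w i ⬝ᵥ x m = wstar i ⬝ᵥ x m + d i ⬝ᵥ x m := by
      intro m i
      rw [hd]
      simp only [sub_dotProduct]
      ring
    -- expansion of the pairwise sums
    have hsq : ∀ m : Fin M,
        (∑ i : Fin N, ∑ j : Fin N, (w i ⬝ᵥ x m - w j ⬝ᵥ x m) ^ 2)
          = (∑ i : Fin N, ∑ j : Fin N, (wstar i ⬝ᵥ x m - wstar j ⬝ᵥ x m) ^ 2)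
          + (∑ i : Fin N, ∑ j : Fin N, (d i ⬝ᵥ x m - d j ⬝ᵥ x m) ^ 2)
          + (4*(N:ℝ)*(∑ i : Fin N, (wstar i ⬝ᵥ x m) * (d i ⬝ᵥ x m))
              - 4*((∑ i : Fin N, wstar i ⬝ᵥ x m)*(∑ i : Fin N, d i ⬝ᵥ x m))) := by
      intro m
      have e1 : ∀ i j : Fin N, (w i ⬝ᵥ x m - w j ⬝ᵥ x m) ^ 2
          = (wstar i ⬝ᵥ x m - wstar j ⬝ᵥ x m) ^ 2 + (d i ⬝ᵥ x m - d j ⬝ᵥ x m) ^ 2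
            + 2 * ((wstar i ⬝ᵥ x m - wstar j ⬝ᵥ x m) * (d i ⬝ᵥ x m - d j ⬝ᵥ x m)) := by
        intro i j
        rw [h_ab m i, h_ab m j]
        ring
      calc (∑ i : Fin N, ∑ j : Fin N, (w i ⬝ᵥ x m - w j ⬝ᵥ x m) ^ 2)
          = (∑ i : Fin N, ∑ j : Fin N, (wstar i ⬝ᵥ x m - wstar j ⬝ᵥ x m) ^ 2)
            + (∑ i : Fin N, ∑ j : Fin N, (d i ⬝ᵥ x m - d j ⬝ᵥ x m) ^ 2)
            + 2 * (∑ i : Fin N, ∑ j : Fin N,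
                (wstar i ⬝ᵥ x m - wstar j ⬝ᵥ x m) * (d i ⬝ᵥ x m - d j ⬝ᵥ x m)) := by
            simp only [e1, Finset.sum_add_distrib, Finset.mul_sum]
        _ = _ := by
            rw [ws_pair_expand N (fun i => wstar i ⬝ᵥ x m) (fun i => d i ⬝ᵥ x m)]
            ring
    -- identify the cross terms
    have E1 : (1 / (4 * (M:ℝ) * (N:ℝ))) * (4*(N:ℝ)) *
        (∑ m : Fin M, ∑ i : Fin N, (wstar i ⬝ᵥ x m) * (d i ⬝ᵥ x m))
          = ∑ i : Fin N, d i ⬝ᵥ (C *ᵥ wstar i) := by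
      have : ∀ i : Fin N, d i ⬝ᵥ (C *ᵥ wstar i)
          = (M:ℝ)⁻¹ * ∑ m : Fin M, (wstar i ⬝ᵥ x m) * (d i ⬝ᵥ x m) := fun i => hCq (d i) (wstar i)
      rw [Finset.sum_congr rfl fun i _ => this i, ← Finset.mul_sum, Finset.sum_comm]
      congr 1
      field_simp
    have hsumd : ∀ m : Fin M, (∑ i : Fin N, d i ⬝ᵥ x m) = (∑ i : Fin N, d i) ⬝ᵥ x m :=
      fun m => (ws_sum_dotProduct d (x m)).symm
    have hsumw : ∀ m : Fin M, (∑ i : Fin N, wstar i ⬝ᵥ x m) = (N:ℝ) * (μinit ⬝ᵥ x m) := by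
      intro m
      rw [← ws_sum_dotProduct wstar (x m), hsum, smul_dotProduct, smul_eq_mul]
    have E2 : (1 / (4 * (M:ℝ) * (N:ℝ))) * 4 *
        (∑ m : Fin M, (∑ i : Fin N, wstar i ⬝ᵥ x m) * (∑ i : Fin N, d i ⬝ᵥ x m))
          = ∑ i : Fin N, d i ⬝ᵥ (C *ᵥ μinit) := by
      have h3 : (∑ i : Fin N, d i) ⬝ᵥ (C *ᵥ μinit)
          = (M:ℝ)⁻¹ * ∑ m : Fin M, (μinit ⬝ᵥ x m) * ((∑ i : Fin N, d i) ⬝ᵥ x m) :=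
        hCq _ _
      rw [← ws_sum_dotProduct (fun i => d i) (C *ᵥ μinit)]
      rw [h3]
      rw [Finset.sum_congr rfl fun m _ => by rw [hsumw m, hsumd m, mul_assoc]]
      rw [← Finset.mul_sum]
      field_simp
    -- expansion of the regularization term
    have hreg : ∀ i : Fin N, (w i - winit i) ⬝ᵥ (w i - winit i)
        = (wstar i - winit i) ⬝ᵥ (wstar i - winit i)
          + 2 * (d i ⬝ᵥ (wstar i - winit i)) + d i ⬝ᵥ d i := by
      intro i
      have hw : w i - winit i = (wstar i - winit i) + d i := by simp only [hd]; abel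
      rw [hw, dotProduct_add, add_dotProduct, add_dotProduct,
        dotProduct_comm (wstar i - winit i) (d i)]
      ring
    -- linear term vanishes
    have hLin : (∑ i : Fin N, d i ⬝ᵥ (C *ᵥ wstar i)) - (∑ i : Fin N, d i ⬝ᵥ (C *ᵥ μinit))
        + γ * (∑ i : Fin N, d i ⬝ᵥ (wstar i - winit i)) = 0 := by
      have : ∀ i : Fin N, d i ⬝ᵥ (C *ᵥ wstar i) - d i ⬝ᵥ (C *ᵥ μinit)
          + γ * (d i ⬝ᵥ (wstar i - winit i)) = 0 := by
        intro i
        have h0 := hzero i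
        have : d i ⬝ᵥ (C *ᵥ wstar i - C *ᵥ μinit + γ • (wstar i - winit i)) = 0 := by
          rw [h0, dotProduct_zero]
        rw [dotProduct_add, dotProduct_sub, dotProduct_smul, smul_eq_mul] at this
        linarith
      rw [← Finset.sum_sub_distrib, Finset.mul_sum, ← Finset.sum_add_distrib]
      rw [Finset.sum_congr rfl fun i _ => this i]
      simp
    -- assemble
    rw [hL w, hL wstar]
    rw [Finset.sum_congr rfl fun m _ => hsq m]
    rw [Finset.sum_congr rfl fun i _ => hreg i]
    simp only [Finset.sum_add_distrib, Finset.sum_sub_distrib, ← Finset.mul_sum]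
    linear_combination E1 - E2 + hLin
  -- conclude
  constructor
  · intro w
    rw [hdecomp w]
    have h1 : 0 ≤ (1 / (4 * (M:ℝ) * (N:ℝ))) * ∑ m : Fin M, ∑ i : Fin N, ∑ j : Fin N,
        ((w i - wstar i) ⬝ᵥ x m - (w j - wstar j) ⬝ᵥ x m) ^ 2 :=
      mul_nonneg (by positivity) (Finset.sum_nonneg fun m _ => Finset.sum_nonneg fun i _ =>
        Finset.sum_nonneg fun j _ => sq_nonneg _)
    have h2 : 0 ≤ (γ / 2) * ∑ i : Fin N, (w i - wstar i) ⬝ᵥ (w i - wstar i) :=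
      mul_nonneg (by positivity) (Finset.sum_nonneg fun i _ => ws_dps_nonneg _)
    linarith
  · intro w hw
    have h := hw wstar
    rw [hdecomp w] at h
    have h1 : 0 ≤ (1 / (4 * (M:ℝ) * (N:ℝ))) * ∑ m : Fin M, ∑ i : Fin N, ∑ j : Fin N,
        ((w i - wstar i) ⬝ᵥ x m - (w j - wstar j) ⬝ᵥ x m) ^ 2 :=
      mul_nonneg (by positivity) (Finset.sum_nonneg fun m _ => Finset.sum_nonneg fun i _ =>
        Finset.sum_nonneg fun j _ => sq_nonneg _)
    have h2 : 0 ≤ ∑ i : Fin N, (w i - wstar i) ⬝ᵥ (w i - wstar i) :=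
      Finset.sum_nonneg fun i _ => ws_dps_nonneg _
    have h3 : (∑ i : Fin N, (w i - wstar i) ⬝ᵥ (w i - wstar i)) = 0 := by nlinarith
    have h4 : ∀ i : Fin N, (w i - wstar i) ⬝ᵥ (w i - wstar i) = 0 := by
      intro i
      have := (Finset.sum_eq_zero_iff_of_nonneg
        (fun i _ => ws_dps_nonneg (w i - wstar i))).mp h3 i (Finset.mem_univ i)
      exact this
    funext i
    have := dotProduct_self_eq_zero.mp (h4 i)
    exact sub_eq_zero.mp this
end

section
/- If the input covariance matrix satisfies C = I (the k×k identity), then the unique global minimizer of the weight-sharing objective L is w_i* = (1/(1+γ)) μ^init + (γ/(1+γ)) w_i^init for every i, where μ^init = (1/N) Σ_{j=1}^N w_j^init. -/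
open Matrix
open scoped BigOperators

/-- If the input covariance matrix is the identity, the unique global minimizer of the
weight-sharing objective is `wᵢ* = (1/(1+γ)) μ^init + (γ/(1+γ)) wᵢ^init`. -/
theorem weight_sharing_minimizer_identity_covariance
    (N M k : ℕ) (hN : 1 ≤ N) (hM : 1 ≤ M)
    (x : Fin M → (Fin k → ℝ))
    (winit : Fin N → (Fin k → ℝ))
    (γ : ℝ) (hγ : 0 < γ)
    (L : (Fin N → (Fin k → ℝ)) → ℝ)
    (hL : ∀ w, L w =
        (1 / (4 * (M : ℝ) * (N : ℝ))) *
          ∑ m : Fin M, ∑ i : Fin N, ∑ j : Fin N,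
            (w i ⬝ᵥ x m - w j ⬝ᵥ x m) ^ 2
        + (γ / 2) * ∑ i : Fin N, (w i - winit i) ⬝ᵥ (w i - winit i))
    (C : Matrix (Fin k) (Fin k) ℝ)
    (hC : C = (M : ℝ)⁻¹ • ∑ m : Fin M, vecMulVec (x m) (x m))
    (hCid : C = 1)
    (μinit : Fin k → ℝ)
    (hμ : μinit = (N : ℝ)⁻¹ • ∑ j : Fin N, winit j)
    (wstar : Fin N → (Fin k → ℝ))
    (hwstar : ∀ i, wstar i = (1 / (1 + γ)) • μinit + (γ / (1 + γ)) • winit i) :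
    (∀ w, L wstar ≤ L w) ∧ ∀ w, (∀ w', L w ≤ L w') → w = wstar := by
  have hMpos : (0:ℝ) < (M:ℝ) := by exact_mod_cast Nat.lt_of_lt_of_le Nat.zero_lt_one hM
  have hNpos : (0:ℝ) < (N:ℝ) := by exact_mod_cast Nat.lt_of_lt_of_le Nat.zero_lt_one hN
  have h1γ : (0:ℝ) < 1 + γ := by linarith
  rw [hC] at hCid
  -- dot products with sums
  have sum_dot : ∀ (f : Fin N → Fin k → ℝ) (v : Fin k → ℝ),
      (∑ i, f i) ⬝ᵥ v = ∑ i, f i ⬝ᵥ v := by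
    intro f v
    simp only [dotProduct, Finset.sum_apply, Finset.sum_mul]
    exact Finset.sum_comm
  have dot_sum : ∀ (v : Fin k → ℝ) (f : Fin N → Fin k → ℝ),
      v ⬝ᵥ (∑ i, f i) = ∑ i, v ⬝ᵥ f i := by
    intro v f
    simp only [dotProduct, Finset.sum_apply, Finset.mul_sum]
    exact Finset.sum_comm
  have dself : ∀ v : Fin k → ℝ, 0 ≤ v ⬝ᵥ v := by
    intro v
    simp only [dotProduct]
    exact Finset.sum_nonneg fun a _ => mul_self_nonneg _
  -- entrywise form of the identity-covariance hypothesis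
  have hxx : ∀ a b, ∑ m, x m a * x m b = (M:ℝ) * (if a = b then (1:ℝ) else 0) := by
    intro a b
    have h := congrFun (congrFun hCid a) b
    simp only [Matrix.smul_apply, Matrix.sum_apply, Matrix.vecMulVec_apply,
      Matrix.one_apply, smul_eq_mul] at h
    rw [inv_mul_eq_div, div_eq_iff hMpos.ne'] at h
    rw [h]; ring
  -- key consequence: correlations of dot products
  have key : ∀ u v : Fin k → ℝ, ∑ m, (u ⬝ᵥ x m) * (v ⬝ᵥ x m) = (M:ℝ) * (u ⬝ᵥ v) := by
    intro u v
    simp only [dotProduct]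
    have step : ∀ m : Fin M, (∑ a, u a * x m a) * (∑ b, v b * x m b)
        = ∑ a, ∑ b, u a * v b * (x m a * x m b) := by
      intro m
      rw [Finset.sum_mul_sum]
      exact Finset.sum_congr rfl fun a _ => Finset.sum_congr rfl fun b _ => by ring
    calc ∑ m, (∑ a, u a * x m a) * (∑ b, v b * x m b)
        = ∑ m, ∑ a, ∑ b, u a * v b * (x m a * x m b) :=
          Finset.sum_congr rfl fun m _ => step m
      _ = ∑ a, ∑ b, ∑ m, u a * v b * (x m a * x m b) := by
          rw [Finset.sum_comm]
          exact Finset.sum_congr rfl fun a _ => Finset.sum_comm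
      _ = ∑ a, ∑ b, u a * v b * ((M:ℝ) * (if a = b then (1:ℝ) else 0)) := by
          refine Finset.sum_congr rfl fun a _ => Finset.sum_congr rfl fun b _ => ?_
          rw [← Finset.mul_sum, hxx]
      _ = (M:ℝ) * ∑ a, u a * v a := by
          rw [Finset.mul_sum]
          refine Finset.sum_congr rfl fun a _ => ?_
          rw [Finset.sum_eq_single a]
          · simp; ring
          · intro b _ hb; simp [Ne.symm hb]
          · intro h; exact absurd (Finset.mem_univ a) h
  -- stationarity of wstar
  have hzero : ∀ i, (1 + γ) • wstar i - μinit - γ • winit i = 0 := by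
    intro i
    funext a
    rw [hwstar]
    simp only [Pi.sub_apply, Pi.smul_apply, Pi.add_apply, smul_eq_mul, Pi.zero_apply]
    field_simp
    ring
  -- sum of wstar
  have hsumw : ∑ j, wstar j = (N:ℝ) • μinit := by
    funext a
    have hμa : (N:ℝ) * μinit a = ∑ j, winit j a := by
      rw [hμ]
      simp only [Pi.smul_apply, Finset.sum_apply, smul_eq_mul]
      field_simp
    simp only [Finset.sum_apply, Pi.smul_apply, smul_eq_mul]
    calc ∑ j, wstar j a = ∑ j, ((1/(1+γ)) * μinit a + (γ/(1+γ)) * winit j a) := by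
          refine Finset.sum_congr rfl fun j _ => ?_
          rw [hwstar]
          simp [smul_eq_mul]
      _ = (N:ℝ) * ((1/(1+γ)) * μinit a) + (γ/(1+γ)) * ∑ j, winit j a := by
          rw [Finset.sum_add_distrib, Finset.sum_const, Finset.card_fin, ← Finset.mul_sum,
            nsmul_eq_mul]
      _ = (N:ℝ) * μinit a := by
          rw [← hμa]; field_simp
  set c : ℝ := 1 / (4 * (M:ℝ) * (N:ℝ)) with hc
  -- the main quadratic expansion identity
  have main : ∀ w : Fin N → (Fin k → ℝ), L w = L wstar
      + c * ∑ m, ∑ i, ∑ j,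
          ((w i - wstar i) ⬝ᵥ x m - (w j - wstar j) ⬝ᵥ x m) ^ 2
      + (γ/2) * ∑ i, ((w i - wstar i) ⬝ᵥ (w i - wstar i)) := by
    intro w
    rw [hL w, hL wstar]
    have hA1 : ∀ (m : Fin M) (i j : Fin N), (w i ⬝ᵥ x m - w j ⬝ᵥ x m)^2
        = (wstar i ⬝ᵥ x m - wstar j ⬝ᵥ x m)^2
        + ((w i - wstar i) ⬝ᵥ x m - (w j - wstar j) ⬝ᵥ x m)^2
        + 2 * (((wstar i - wstar j) ⬝ᵥ x m)
            * (((w i - wstar i) - (w j - wstar j)) ⬝ᵥ x m)) := by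
      intro m i j
      simp only [sub_dotProduct]
      ring
    have hB1 : ∀ i, ((w i - winit i) ⬝ᵥ (w i - winit i))
        = ((wstar i - winit i) ⬝ᵥ (wstar i - winit i))
        + ((w i - wstar i) ⬝ᵥ (w i - wstar i))
        + 2 * ((wstar i - winit i) ⬝ᵥ (w i - wstar i)) := by
      intro i
      have hw : w i - winit i = (wstar i - winit i) + (w i - wstar i) := by abel
      rw [hw, add_dotProduct, dotProduct_add, dotProduct_add,
        dotProduct_comm (w i - wstar i) (wstar i - winit i)]
      ring
    have hAsum : ∑ m, ∑ i, ∑ j, (w i ⬝ᵥ x m - w j ⬝ᵥ x m)^2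
        = ∑ m, ∑ i, ∑ j, (wstar i ⬝ᵥ x m - wstar j ⬝ᵥ x m)^2
        + ∑ m, ∑ i, ∑ j, ((w i - wstar i) ⬝ᵥ x m - (w j - wstar j) ⬝ᵥ x m)^2
        + 2 * (M:ℝ) * ∑ i, ∑ j,
            ((wstar i - wstar j) ⬝ᵥ ((w i - wstar i) - (w j - wstar j))) := by
      have hcr : ∑ m, ∑ i, ∑ j, 2 * (((wstar i - wstar j) ⬝ᵥ x m)
            * (((w i - wstar i) - (w j - wstar j)) ⬝ᵥ x m))
          = 2 * (M:ℝ) * ∑ i, ∑ j,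
            ((wstar i - wstar j) ⬝ᵥ ((w i - wstar i) - (w j - wstar j))) := by
        rw [Finset.sum_comm, Finset.mul_sum]
        refine Finset.sum_congr rfl fun i _ => ?_
        rw [Finset.sum_comm, Finset.mul_sum]
        refine Finset.sum_congr rfl fun j _ => ?_
        have : ∑ m, 2 * (((wstar i - wstar j) ⬝ᵥ x m)
              * (((w i - wstar i) - (w j - wstar j)) ⬝ᵥ x m))
            = 2 * ∑ m, (((wstar i - wstar j) ⬝ᵥ x m)
              * (((w i - wstar i) - (w j - wstar j)) ⬝ᵥ x m)) := by
          rw [Finset.mul_sum]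
        rw [this, key]
        ring
      calc ∑ m, ∑ i, ∑ j, (w i ⬝ᵥ x m - w j ⬝ᵥ x m)^2
          = ∑ m, ∑ i, ∑ j, ((wstar i ⬝ᵥ x m - wstar j ⬝ᵥ x m)^2
            + ((w i - wstar i) ⬝ᵥ x m - (w j - wstar j) ⬝ᵥ x m)^2
            + 2 * (((wstar i - wstar j) ⬝ᵥ x m)
                * (((w i - wstar i) - (w j - wstar j)) ⬝ᵥ x m))) :=
            Finset.sum_congr rfl fun m _ => Finset.sum_congr rfl fun i _ =>
              Finset.sum_congr rfl fun j _ => hA1 m i j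
        _ = _ := by
            simp only [Finset.sum_add_distrib]
            rw [hcr]
    -- the double cross sum equals 2N ∑ᵢ ⟪wstarᵢ - μ, dᵢ⟫
    have hdbl : ∑ i, ∑ j, ((wstar i - wstar j) ⬝ᵥ ((w i - wstar i) - (w j - wstar j)))
        = 2 * (N:ℝ) * ∑ i, ((wstar i ⬝ᵥ (w i - wstar i)) - (μinit ⬝ᵥ (w i - wstar i))) := by
      have hterm : ∀ i j, ((wstar i - wstar j) ⬝ᵥ ((w i - wstar i) - (w j - wstar j)))
          = wstar i ⬝ᵥ (w i - wstar i) - wstar i ⬝ᵥ (w j - wstar j)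
            - wstar j ⬝ᵥ (w i - wstar i) + wstar j ⬝ᵥ (w j - wstar j) := by
        intro i j
        simp only [sub_dotProduct, dotProduct_sub]
        ring
      have hA : ∑ i : Fin N, ∑ j : Fin N, wstar i ⬝ᵥ (w i - wstar i)
          = (N:ℝ) * ∑ i, wstar i ⬝ᵥ (w i - wstar i) := by
        simp only [Finset.sum_const, Finset.card_fin, nsmul_eq_mul]
        rw [Finset.mul_sum]
      have hD : ∑ i : Fin N, ∑ j : Fin N, wstar j ⬝ᵥ (w j - wstar j)
          = (N:ℝ) * ∑ j, wstar j ⬝ᵥ (w j - wstar j) := by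
        rw [Finset.sum_const, Finset.card_fin, nsmul_eq_mul]
      have hB : ∑ i : Fin N, ∑ j : Fin N, wstar i ⬝ᵥ (w j - wstar j)
          = (N:ℝ) * ∑ j, μinit ⬝ᵥ (w j - wstar j) := by
        rw [Finset.sum_comm]
        refine Eq.trans ?_ (Finset.mul_sum _ _ _).symm
        refine Finset.sum_congr rfl fun j _ => ?_
        rw [← sum_dot, hsumw, smul_dotProduct, smul_eq_mul]
      have hB' : ∑ i : Fin N, ∑ j : Fin N, wstar j ⬝ᵥ (w i - wstar i)
          = (N:ℝ) * ∑ i, μinit ⬝ᵥ (w i - wstar i) := by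
        refine Eq.trans ?_ (Finset.mul_sum _ _ _).symm
        refine Finset.sum_congr rfl fun i _ => ?_
        rw [← sum_dot, hsumw, smul_dotProduct, smul_eq_mul]
      calc ∑ i, ∑ j, ((wstar i - wstar j) ⬝ᵥ ((w i - wstar i) - (w j - wstar j)))
          = ∑ i, ∑ j, (wstar i ⬝ᵥ (w i - wstar i) - wstar i ⬝ᵥ (w j - wstar j)
            - wstar j ⬝ᵥ (w i - wstar i) + wstar j ⬝ᵥ (w j - wstar j)) :=
            Finset.sum_congr rfl fun i _ => Finset.sum_congr rfl fun j _ => hterm i j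
        _ = (∑ i : Fin N, ∑ j : Fin N, wstar i ⬝ᵥ (w i - wstar i))
            - (∑ i : Fin N, ∑ j : Fin N, wstar i ⬝ᵥ (w j - wstar j))
            - (∑ i : Fin N, ∑ j : Fin N, wstar j ⬝ᵥ (w i - wstar i))
            + (∑ i : Fin N, ∑ j : Fin N, wstar j ⬝ᵥ (w j - wstar j)) := by
            simp only [Finset.sum_add_distrib, Finset.sum_sub_distrib]
        _ = 2 * (N:ℝ) * ∑ i, ((wstar i ⬝ᵥ (w i - wstar i)) - (μinit ⬝ᵥ (w i - wstar i))) := by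
            rw [hA, hD, hB, hB', Finset.sum_sub_distrib]
            ring
    -- the per-neuron stationarity in scalar form
    have hstat : ∀ i, (wstar i ⬝ᵥ (w i - wstar i)) - (μinit ⬝ᵥ (w i - wstar i))
        + γ * ((wstar i - winit i) ⬝ᵥ (w i - wstar i)) = 0 := by
      intro i
      have h0 : ((1 + γ) • wstar i - μinit - γ • winit i) ⬝ᵥ (w i - wstar i) = 0 := by
        rw [hzero i, zero_dotProduct]
      rw [sub_dotProduct, sub_dotProduct, smul_dotProduct, smul_dotProduct,
        smul_eq_mul, smul_eq_mul] at h0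
      have hwi : (wstar i - winit i) ⬝ᵥ (w i - wstar i)
          = wstar i ⬝ᵥ (w i - wstar i) - winit i ⬝ᵥ (w i - wstar i) := sub_dotProduct _ _ _
      rw [hwi]
      nlinarith [h0]
    have hstatsum : ∑ i, ((wstar i ⬝ᵥ (w i - wstar i)) - (μinit ⬝ᵥ (w i - wstar i)))
        = - γ * ∑ i, ((wstar i - winit i) ⬝ᵥ (w i - wstar i)) := by
      rw [Finset.mul_sum]
      refine Finset.sum_congr rfl fun i _ => ?_
      have := hstat i
      linarith
    -- combine everything
    rw [hAsum, hdbl]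
    have hBsum : ∑ i, ((w i - winit i) ⬝ᵥ (w i - winit i))
        = ∑ i, ((wstar i - winit i) ⬝ᵥ (wstar i - winit i))
        + ∑ i, ((w i - wstar i) ⬝ᵥ (w i - wstar i))
        + 2 * ∑ i, ((wstar i - winit i) ⬝ᵥ (w i - wstar i)) := by
      rw [Finset.mul_sum]
      calc ∑ i, ((w i - winit i) ⬝ᵥ (w i - winit i))
          = ∑ i, (((wstar i - winit i) ⬝ᵥ (wstar i - winit i))
            + ((w i - wstar i) ⬝ᵥ (w i - wstar i))
            + 2 * ((wstar i - winit i) ⬝ᵥ (w i - wstar i))) :=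
            Finset.sum_congr rfl fun i _ => hB1 i
        _ = _ := by simp only [Finset.sum_add_distrib]
    rw [hBsum, hstatsum]
    have hMN : 4 * (M:ℝ) * (N:ℝ) ≠ 0 := by positivity
    rw [hc]
    field_simp
    ring
  -- nonnegativity of the two remainder terms
  have hrem1 : ∀ w : Fin N → (Fin k → ℝ), 0 ≤ c * ∑ m, ∑ i, ∑ j,
      ((w i - wstar i) ⬝ᵥ x m - (w j - wstar j) ⬝ᵥ x m) ^ 2 := by
    intro w
    apply mul_nonneg
    · rw [hc]; positivity
    · refine Finset.sum_nonneg fun m _ => Finset.sum_nonneg fun i _ =>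
        Finset.sum_nonneg fun j _ => sq_nonneg _
  have hrem2 : ∀ w : Fin N → (Fin k → ℝ),
      0 ≤ ∑ i, ((w i - wstar i) ⬝ᵥ (w i - wstar i)) :=
    fun w => Finset.sum_nonneg fun i _ => dself _
  constructor
  · intro w
    rw [main w]
    have h1 := hrem1 w
    have h2 := hrem2 w
    nlinarith
  · intro w hw
    have hle := hw wstar
    rw [main w] at hle
    have h1 := hrem1 w
    have h2 := hrem2 w
    have h3 : ∑ i, ((w i - wstar i) ⬝ᵥ (w i - wstar i)) = 0 := by nlinarith
    funext i
    have h4 : ∀ i ∈ Finset.univ, (0:ℝ) ≤ ((w i - wstar i) ⬝ᵥ (w i - wstar i)) :=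
      fun i _ => dself _
    have h5 := (Finset.sum_eq_zero_iff_of_nonneg h4).mp h3 i (Finset.mem_univ i)
    have h6 : w i - wstar i = 0 := dotProduct_self_eq_zero.mp h5
    have := sub_eq_zero.mp h6
    exact this
end

section
/- Consider the biased weight update Δw_i ∝ −(z_i − (α/(N(1+α))) Σ_{j=1}^N z_j) x_m − γ (w_i − w_i^init) with z_i = w_i^T x_m, averaged uniformly over inputs x_1,…,x_M. At any point (w_1*,…,w_N*) where all averaged updates vanish, the mean weight satisfies (1/N) Σ_{i=1}^N w_i* = γ ((1/(1+α)) C + γ I)^{-1} μ^init, where C = (1/M) Σ_{m=1}^M x_m x_m^T and μ^init = (1/N) Σ_{j=1}^N w_j^init. -/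
open Matrix
open scoped BigOperators

lemma vecMulVec_mulVec' {k : ℕ} (u v w : Fin k → ℝ) :
    vecMulVec u v *ᵥ w = (v ⬝ᵥ w) • u := by
  ext i
  simp only [mulVec, dotProduct, vecMulVec_apply, Pi.smul_apply, smul_eq_mul, Finset.mul_sum]
  rw [Finset.sum_mul]
  exact Finset.sum_congr rfl fun j _ => by ring

lemma sum_mulVec' {k M : ℕ} (B : Fin M → Matrix (Fin k) (Fin k) ℝ) (v : Fin k → ℝ) :
    (∑ m, B m) *ᵥ v = ∑ m, B m *ᵥ v := by
  ext i
  simp only [mulVec, dotProduct, Finset.sum_apply, Matrix.sum_apply, Finset.sum_mul]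
  exact Finset.sum_comm

lemma sum_dotProduct' {N k : ℕ} (w : Fin N → Fin k → ℝ) (v : Fin k → ℝ) :
    (∑ j, w j) ⬝ᵥ v = ∑ j, w j ⬝ᵥ v := by
  simp only [dotProduct, Finset.sum_apply, Finset.sum_mul]
  exact Finset.sum_comm

lemma dotProduct_sum' {M k : ℕ} (v : Fin k → ℝ) (w : Fin M → Fin k → ℝ) :
    v ⬝ᵥ (∑ m, w m) = ∑ m, v ⬝ᵥ w m := by
  simp only [dotProduct, Finset.sum_apply, Finset.mul_sum]
  exact Finset.sum_comm

/-- For the biased weight update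
`Δwᵢ = −(zᵢ − (α/(N(1+α))) Σ_j z_j) x_m − γ (wᵢ − wᵢ^init)` (with `zᵢ = wᵢᵀ x_m`), averaged
uniformly over the inputs `x_1, …, x_M`, at any point where all averaged updates vanish the
mean weight satisfies `(1/N) Σ_i wᵢ* = γ ((1/(1+α)) C + γ I)⁻¹ μ^init`. -/
theorem biased_update_stationary_mean_weight
    (N M k : ℕ) (hN : 1 ≤ N) (hM : 1 ≤ M)
    (x : Fin M → (Fin k → ℝ))
    (winit : Fin N → (Fin k → ℝ))
    (γ α : ℝ) (hγ : 0 < γ) (hα : 0 < α)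
    (C : Matrix (Fin k) (Fin k) ℝ)
    (hC : C = (M : ℝ)⁻¹ • ∑ m : Fin M, vecMulVec (x m) (x m))
    (μinit : Fin k → ℝ)
    (hμ : μinit = (N : ℝ)⁻¹ • ∑ j : Fin N, winit j)
    (wstar : Fin N → (Fin k → ℝ))
    (hstat : ∀ i, (M : ℝ)⁻¹ • ∑ m : Fin M,
        (-(wstar i ⬝ᵥ x m - (α / ((N : ℝ) * (1 + α))) * ∑ j : Fin N, wstar j ⬝ᵥ x m) • x m
          - γ • (wstar i - winit i)) = 0) :
    (N : ℝ)⁻¹ • ∑ i : Fin N, wstar i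
      = γ • (((1 + α)⁻¹ • C + γ • 1)⁻¹ *ᵥ μinit) := by
  have hNz : (N : ℝ) ≠ 0 := by positivity
  have hMz : (M : ℝ) ≠ 0 := by positivity
  have h1α : (0:ℝ) < 1 + α := by linarith
  set μ : Fin k → ℝ := (N : ℝ)⁻¹ • ∑ i, wstar i with hμdef
  set A : Matrix (Fin k) (Fin k) ℝ := (1 + α)⁻¹ • C + γ • 1 with hA
  set S : Fin k → ℝ := ∑ m : Fin M, (μ ⬝ᵥ x m) • x m with hSdef
  set D : Fin k → ℝ := (∑ i, wstar i) - ∑ i, winit i with hDdef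
  have hsum : ∀ i, ∑ m : Fin M,
      (-(wstar i ⬝ᵥ x m - (α / ((N : ℝ) * (1 + α))) * ∑ j : Fin N, wstar j ⬝ᵥ x m) • x m
        - γ • (wstar i - winit i)) = 0 := by
    intro i
    rcases smul_eq_zero.mp (hstat i) with h | h
    · exact absurd h (inv_ne_zero hMz)
    · exact h
  have hdot : ∀ m, μ ⬝ᵥ x m = (N:ℝ)⁻¹ * ∑ j : Fin N, wstar j ⬝ᵥ x m := by
    intro m
    rw [hμdef, smul_dotProduct, sum_dotProduct', smul_eq_mul]
  have htot : ∑ m : Fin M, ∑ i : Fin N,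
      (-(wstar i ⬝ᵥ x m - (α / ((N : ℝ) * (1 + α))) * ∑ j : Fin N, wstar j ⬝ᵥ x m) • x m
        - γ • (wstar i - winit i)) = 0 := by
    rw [Finset.sum_comm]
    exact Finset.sum_eq_zero fun i _ => hsum i
  have hsplit : ∀ m : Fin M, ∑ i : Fin N,
      (-(wstar i ⬝ᵥ x m - (α / ((N : ℝ) * (1 + α))) * ∑ j : Fin N, wstar j ⬝ᵥ x m) • x m
        - γ • (wstar i - winit i))
      = (-(N:ℝ) * ((1 + α)⁻¹ * (μ ⬝ᵥ x m))) • x m - γ • D := by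
    intro m
    rw [Finset.sum_sub_distrib, ← Finset.sum_smul]
    congr 1
    · congr 1
      have h2 : ∑ i : Fin N,
          -(wstar i ⬝ᵥ x m - (α / ((N : ℝ) * (1 + α))) * ∑ j : Fin N, wstar j ⬝ᵥ x m)
          = ∑ i : Fin N,
          ((α / ((N : ℝ) * (1 + α))) * (∑ j : Fin N, wstar j ⬝ᵥ x m) - wstar i ⬝ᵥ x m) := by
        exact Finset.sum_congr rfl fun i _ => by ring
      rw [h2, Finset.sum_sub_distrib, Finset.sum_const, Finset.card_univ, Fintype.card_fin,
        nsmul_eq_mul, hdot m]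
      field_simp
      ring
    · rw [hDdef, ← Finset.smul_sum, Finset.sum_sub_distrib]
  simp only [hsplit] at htot
  rw [Finset.sum_sub_distrib, Finset.sum_const, Finset.card_univ, Fintype.card_fin,
    sub_eq_zero] at htot
  simp only [← Nat.cast_smul_eq_nsmul ℝ] at htot
  have hS : (-(N:ℝ) * (1 + α)⁻¹) • S = (M:ℝ) • (γ • D) := by
    rw [hSdef, Finset.smul_sum, ← htot]
    exact Finset.sum_congr rfl fun m _ => by rw [smul_smul, mul_assoc]
  have hCμ : C *ᵥ μ = (M:ℝ)⁻¹ • S := by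
    rw [hC, smul_mulVec, sum_mulVec']
    congr 1
    exact Finset.sum_congr rfl fun m _ => by rw [vecMulVec_mulVec', dotProduct_comm]
  -- key stationarity equation for the mean
  have hkey : A *ᵥ μ = γ • μinit := by
    rw [hA, add_mulVec, smul_mulVec, smul_mulVec, one_mulVec, hCμ, hμ, hμdef]
    have hSval : S = (-(N:ℝ) * (1 + α)⁻¹)⁻¹ • ((M:ℝ) • (γ • D)) := by
      rw [← hS, smul_smul, inv_mul_cancel₀ (by
        exact mul_ne_zero (neg_ne_zero.mpr hNz) (inv_ne_zero h1α.ne')), one_smul]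
    rw [hSval, hDdef]
    match_scalars <;> · field_simp <;> ring
  -- positive definiteness of A
  have hherm : A.IsHermitian := by
    have hCh : C.IsHermitian := by
      rw [hC]
      show _ᴴ = _
      rw [conjTranspose_smul, conjTranspose_sum]
      simp only [star_trivial]
      congr 1
      exact Finset.sum_congr rfl fun m _ => by
        ext i j
        simp [conjTranspose_apply, vecMulVec_apply, mul_comm]
    show _ᴴ = _
    rw [hA, conjTranspose_add, conjTranspose_smul, conjTranspose_smul, conjTranspose_one, hCh]
    simp
  have hposC : ∀ v : Fin k → ℝ, 0 ≤ v ⬝ᵥ (C *ᵥ v) := by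
    intro v
    rw [hC, smul_mulVec, sum_mulVec', dotProduct_smul]
    simp only [vecMulVec_mulVec', dotProduct_sum']
    have : ∀ m : Fin M, 0 ≤ v ⬝ᵥ ((x m ⬝ᵥ v) • x m) := by
      intro m
      rw [dotProduct_smul, smul_eq_mul, dotProduct_comm]
      exact mul_self_nonneg _
    have h1 : 0 ≤ ∑ m : Fin M, v ⬝ᵥ ((x m ⬝ᵥ v) • x m) := Finset.sum_nonneg fun m _ => this m
    rw [smul_eq_mul]
    positivity
  have hpos : A.PosDef := by
    refine Matrix.PosDef.of_dotProduct_mulVec_pos hherm fun v hv => ?_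
    have hsv : star v = v := by simp
    rw [hsv, hA, add_mulVec, smul_mulVec, smul_mulVec, one_mulVec,
      dotProduct_add, dotProduct_smul, dotProduct_smul, smul_eq_mul, smul_eq_mul]
    have h1 : 0 ≤ v ⬝ᵥ (C *ᵥ v) := hposC v
    have h2 : 0 < v ⬝ᵥ v := by
      have := Matrix.dotProduct_star_self_pos_iff (v := v) |>.mpr hv
      rwa [hsv] at this
    have h3 : 0 < (1 + α)⁻¹ := inv_pos.mpr h1α
    nlinarith
  have hdet : IsUnit A.det := hpos.det_pos.ne'.isUnit
  calc μ = (A⁻¹ * A) *ᵥ μ := by rw [Matrix.nonsing_inv_mul A hdet, one_mulVec]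
    _ = A⁻¹ *ᵥ (A *ᵥ μ) := by rw [← mulVec_mulVec]
    _ = A⁻¹ *ᵥ (γ • μinit) := by rw [hkey]
    _ = γ • (A⁻¹ *ᵥ μinit) := mulVec_smul _ _ _
end

section
/- For the biased weight update Δw_i ∝ −(z_i − (α/(N(1+α))) Σ_{j=1}^N z_j) x_m − γ (w_i − w_i^init) with z_i = w_i^T x_m, averaged uniformly over inputs x_1,…,x_M, the point at which all averaged updates vanish is given by w_i* = (C + γ I)^{-1} ( (γα/(1+α)) C ((1/(1+α)) C + γ I)^{-1} μ^init + γ w_i^init ) for every i, where C = (1/M) Σ_{m=1}^M x_m x_m^T and μ^init = (1/N) Σ_{j=1}^N w_j^init. -/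
open Matrix
open scoped BigOperators

private lemma sumDot {k N : ℕ} (w : Fin N → (Fin k → ℝ)) (v : Fin k → ℝ) :
    (∑ j : Fin N, w j) ⬝ᵥ v = ∑ j : Fin N, w j ⬝ᵥ v := by
  simp only [dotProduct, Finset.sum_apply, Finset.sum_mul]
  exact Finset.sum_comm

private lemma mulVecSum {k N : ℕ} (A : Matrix (Fin k) (Fin k) ℝ) (w : Fin N → (Fin k → ℝ)) :
    A *ᵥ (∑ j : Fin N, w j) = ∑ j : Fin N, A *ᵥ w j := by
  ext i
  simp only [mulVec, dotProduct, Finset.sum_apply, Finset.mul_sum]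
  exact Finset.sum_comm

private lemma sumMulVec {k M : ℕ} (A : Fin M → Matrix (Fin k) (Fin k) ℝ) (v : Fin k → ℝ) :
    (∑ m : Fin M, A m) *ᵥ v = ∑ m : Fin M, A m *ᵥ v := by
  ext i
  simp only [mulVec, dotProduct, Finset.sum_apply, Matrix.sum_apply, Finset.sum_mul]
  exact Finset.sum_comm

private lemma vecMulVecMulVec {k : ℕ} (u v : Fin k → ℝ) :
    vecMulVec u u *ᵥ v = (u ⬝ᵥ v) • u := by
  ext i
  simp [vecMulVec_apply, mulVec, dotProduct, Finset.mul_sum, mul_comm, mul_assoc, mul_left_comm]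

private lemma cancelInv {k : ℕ} {A : Matrix (Fin k) (Fin k) ℝ} (hA : A.PosDef)
    (v : Fin k → ℝ) : A⁻¹ *ᵥ (A *ᵥ v) = v := by
  rw [mulVec_mulVec, nonsing_inv_mul _ (isUnit_iff_ne_zero.mpr hA.det_pos.ne'), one_mulVec]

private lemma smulOnePosDef {k : ℕ} {γ : ℝ} (hγ : 0 < γ) :
    (γ • (1 : Matrix (Fin k) (Fin k) ℝ)).PosDef := by
  refine Matrix.PosDef.of_dotProduct_mulVec_pos ?_ fun v hv => ?_
  · simp [Matrix.IsHermitian]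
  · rw [smul_mulVec, one_mulVec, dotProduct_smul]
    have hvv : 0 < v ⬝ᵥ v := by
      have := (Matrix.dotProduct_star_self_pos_iff (R := ℝ) (v := v)).mpr hv
      simpa using this
    have hsv : star v ⬝ᵥ v = v ⬝ᵥ v := by simp
    rw [hsv]
    positivity

/-- For the biased weight update
`Δwᵢ = −(zᵢ − (α/(N(1+α))) Σ_j z_j) x_m − γ (wᵢ − wᵢ^init)` (with `zᵢ = wᵢᵀ x_m`), averaged
uniformly over the inputs `x_1, …, x_M`, the point at which all averaged updates vanish is
`wᵢ* = (C + γ I)⁻¹ ((γα/(1+α)) C ((1/(1+α)) C + γ I)⁻¹ μ^init + γ wᵢ^init)`. -/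
theorem biased_update_stationary_point_closed_form
    (N M k : ℕ) (hN : 1 ≤ N) (hM : 1 ≤ M)
    (x : Fin M → (Fin k → ℝ))
    (winit : Fin N → (Fin k → ℝ))
    (γ α : ℝ) (hγ : 0 < γ) (hα : 0 < α)
    (C : Matrix (Fin k) (Fin k) ℝ)
    (hC : C = (M : ℝ)⁻¹ • ∑ m : Fin M, vecMulVec (x m) (x m))
    (μinit : Fin k → ℝ)
    (hμ : μinit = (N : ℝ)⁻¹ • ∑ j : Fin N, winit j)
    (wstar : Fin N → (Fin k → ℝ))
    (hstat : ∀ i, (M : ℝ)⁻¹ • ∑ m : Fin M,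
        (-(wstar i ⬝ᵥ x m - (α / ((N : ℝ) * (1 + α))) * ∑ j : Fin N, wstar j ⬝ᵥ x m) • x m
          - γ • (wstar i - winit i)) = 0) :
    ∀ i, wstar i = (C + γ • 1)⁻¹ *ᵥ
        ((γ * α / (1 + α)) • (C *ᵥ (((1 + α)⁻¹ • C + γ • 1)⁻¹ *ᵥ μinit)) + γ • winit i) := by
  have hM0 : (M : ℝ) ≠ 0 := Nat.cast_ne_zero.mpr (by omega)
  have hN0 : (N : ℝ) ≠ 0 := Nat.cast_ne_zero.mpr (by omega)
  have h1α : (0:ℝ) < 1 + α := by linarith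
  have h1α0 : (1 + α) ≠ 0 := ne_of_gt h1α
  set c : ℝ := α / ((N : ℝ) * (1 + α)) with hc
  set S : Fin k → ℝ := ∑ j : Fin N, wstar j with hS
  -- averaged quadratic action
  have hCv : ∀ v : Fin k → ℝ, C *ᵥ v = (M : ℝ)⁻¹ • ∑ m : Fin M, (v ⬝ᵥ x m) • x m := by
    intro v
    rw [hC, smul_mulVec, sumMulVec]
    congr 1
    exact Finset.sum_congr rfl fun m _ => by rw [vecMulVecMulVec, dotProduct_comm]
  -- positive semidefiniteness of C
  have hCps : C.PosSemidef := by
    refine Matrix.PosSemidef.of_dotProduct_mulVec_nonneg ?_ fun v => ?_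
    · show Cᴴ = C
      ext i j
      simp only [hC, conjTranspose_apply, Matrix.smul_apply, Matrix.sum_apply,
        vecMulVec_apply, star_trivial, smul_eq_mul]
      congr 1
      exact Finset.sum_congr rfl fun m _ => by ring
    · have hsv : star v = v := by simp
      rw [hsv, hCv v, dotProduct_smul, dotProduct_comm, sumDot]
      have hterm : ∀ m : Fin M, ((v ⬝ᵥ x m) • x m) ⬝ᵥ v = (v ⬝ᵥ x m) * (v ⬝ᵥ x m) := by
        intro m
        rw [smul_dotProduct, smul_eq_mul, dotProduct_comm]
      rw [Finset.sum_congr rfl fun m _ => hterm m]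
      have h1 : (0:ℝ) ≤ ∑ m : Fin M, (v ⬝ᵥ x m) * (v ⬝ᵥ x m) :=
        Finset.sum_nonneg fun m _ => mul_self_nonneg _
      have h2 : (0:ℝ) ≤ (M : ℝ)⁻¹ := by positivity
      simpa using mul_nonneg h2 h1
  have hA : (C + γ • 1).PosDef := Matrix.PosDef.posSemidef_add hCps (smulOnePosDef hγ)
  have hCsps : ((1 + α)⁻¹ • C).PosSemidef := by
    refine Matrix.PosSemidef.of_dotProduct_mulVec_nonneg ?_ fun v => ?_
    · show ((1 + α)⁻¹ • C)ᴴ = (1 + α)⁻¹ • C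
      have h := hCps.1
      rw [conjTranspose_smul]
      simp only [star_trivial]
      rw [h]
    · rw [smul_mulVec, dotProduct_smul, smul_eq_mul]
      exact mul_nonneg (by positivity) (hCps.dotProduct_mulVec_nonneg v)
  have hB : ((1 + α)⁻¹ • C + γ • 1).PosDef :=
    Matrix.PosDef.posSemidef_add hCsps (smulOnePosDef hγ)
  -- per-neuron stationarity equation
  have key : ∀ i, C *ᵥ wstar i + γ • wstar i = c • (C *ᵥ S) + γ • winit i := by
    intro i
    have h := hstat i
    have hz : ∀ m : Fin M, (∑ j : Fin N, wstar j ⬝ᵥ x m) = S ⬝ᵥ x m := fun m =>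
      (sumDot wstar (x m)).symm
    have hsum : (∑ m : Fin M,
        (-(wstar i ⬝ᵥ x m - c * ∑ j : Fin N, wstar j ⬝ᵥ x m) • x m
          - γ • (wstar i - winit i)))
        = (c • (∑ m : Fin M, (S ⬝ᵥ x m) • x m) - (∑ m : Fin M, (wstar i ⬝ᵥ x m) • x m))
          - (M : ℝ) • (γ • (wstar i - winit i)) := by
      rw [Finset.sum_sub_distrib]
      congr 1
      · rw [Finset.smul_sum, ← Finset.sum_sub_distrib]
        refine Finset.sum_congr rfl fun m _ => ?_
        rw [hz m, neg_sub, sub_smul, smul_smul]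
      · rw [Finset.sum_const, Finset.card_univ, Fintype.card_fin,
          ← Nat.cast_smul_eq_nsmul ℝ]
    rw [hsum] at h
    rw [smul_sub, smul_sub, smul_smul, mul_comm ((M:ℝ)⁻¹) c, ← smul_smul,
      inv_smul_smul₀ hM0, ← hCv S, ← hCv (wstar i)] at h
    linear_combination (norm := module) -h
  -- sum the equations over i
  have hsumEq : C *ᵥ S + γ • S = ((N : ℝ) * c) • (C *ᵥ S) + ((N : ℝ) * γ) • μinit := by
    have h1 : (∑ i : Fin N, (C *ᵥ wstar i + γ • wstar i))
        = ∑ i : Fin N, (c • (C *ᵥ S) + γ • winit i) :=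
      Finset.sum_congr rfl fun i _ => key i
    have hL : (∑ i : Fin N, (C *ᵥ wstar i + γ • wstar i)) = C *ᵥ S + γ • S := by
      rw [Finset.sum_add_distrib, ← mulVecSum, ← Finset.smul_sum, ← hS]
    have hR : (∑ i : Fin N, (c • (C *ᵥ S) + γ • winit i))
        = ((N : ℝ) * c) • (C *ᵥ S) + ((N : ℝ) * γ) • μinit := by
      rw [Finset.sum_add_distrib, Finset.sum_const, Finset.card_univ, Fintype.card_fin,
        ← Nat.cast_smul_eq_nsmul ℝ, smul_smul, ← Finset.smul_sum, hμ, smul_smul]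
      have : (N : ℝ) * γ * (N : ℝ)⁻¹ = γ := by field_simp
      rw [this]
    rw [hL, hR] at h1
    exact h1
  -- solve for S
  have hNc : (N : ℝ) * c = α / (1 + α) := by
    rw [hc]; field_simp
  have hBS : ((1 + α)⁻¹ • C + γ • 1) *ᵥ S = ((N : ℝ) * γ) • μinit := by
    rw [add_mulVec, smul_mulVec, smul_mulVec, one_mulVec]
    have hcoef : (1 + α)⁻¹ = 1 - (N : ℝ) * c := by
      rw [hNc]; field_simp; ring
    rw [hcoef, sub_smul, one_smul]
    linear_combination (norm := module) hsumEq
  have hSval : S = ((N : ℝ) * γ) • (((1 + α)⁻¹ • C + γ • 1)⁻¹ *ᵥ μinit) := by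
    have h2 := congrArg (fun v => ((1 + α)⁻¹ • C + γ • 1)⁻¹ *ᵥ v) hBS
    simpa [cancelInv hB, mulVec_smul] using h2
  -- finish
  intro i
  have hkey : (C + γ • 1) *ᵥ wstar i = c • (C *ᵥ S) + γ • winit i := by
    rw [add_mulVec, smul_mulVec, one_mulVec]
    exact key i
  have hw : wstar i = (C + γ • 1)⁻¹ *ᵥ (c • (C *ᵥ S) + γ • winit i) := by
    conv_lhs => rw [← cancelInv hA (wstar i), hkey]
  have harg : c • (C *ᵥ S)
      = (γ * α / (1 + α)) • (C *ᵥ (((1 + α)⁻¹ • C + γ • 1)⁻¹ *ᵥ μinit)) := by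
    rw [hSval, mulVec_smul, smul_smul]
    congr 1
    rw [hc]
    field_simp
  rw [hw, harg]
end

section
/- Let f(W, X) = (1/(4N)) Σ_{i,j} (w_i^T x_i − w_j^T x_j)² + (γ/2) Σ_i ‖w_i − w_i^init‖², and suppose the noisy inputs x_i = x_{m} + ε_i satisfy E‖x_m + ε_i‖² ≤ √c and E‖x_m + ε_i‖⁴ ≤ c. Then the expected squared Frobenius norm of the gradient of f with respect to W at any W^k satisfies E ‖∇_W f(W, X)‖_F² ≤ 8(2c + γ²) ‖W^k − W*‖_F² + 8(2c + γ²) ‖W*‖_F² + 4γ² ‖W^init‖_F², for any fixed matrix W* ∈ ℝ^{N×k}. -/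
open MeasureTheory
open scoped RealInnerProductSpace BigOperators
open InnerProductSpace

private lemma sum_sq_pairs {N : ℕ} (hN : (N:ℝ) ≠ 0) (a : Fin N → ℝ) :
    (1 / (4 * (N : ℝ))) * ∑ i : Fin N, ∑ j : Fin N, (a i - a j) ^ 2
      = (1/2) * ∑ i : Fin N, a i ^ 2 - (1/(2*(N:ℝ))) * (∑ i : Fin N, a i) ^ 2 := by
  have h : ∑ i : Fin N, ∑ j : Fin N, (a i - a j) ^ 2
      = 2 * (N:ℝ) * ∑ i : Fin N, a i ^ 2 - 2 * (∑ i : Fin N, a i) ^ 2 := by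
    have : ∀ i : Fin N, ∑ j : Fin N, (a i - a j) ^ 2
        = (N:ℝ) * a i ^ 2 - 2 * a i * (∑ j : Fin N, a j) + ∑ j : Fin N, a j ^ 2 := by
      intro i
      rw [Finset.sum_congr rfl (fun j _ => sub_sq (a i) (a j)), Finset.sum_add_distrib,
        Finset.sum_sub_distrib, Finset.sum_const, Finset.card_univ, Fintype.card_fin,
        ← Finset.mul_sum]
      push_cast
      ring
    rw [Finset.sum_congr rfl (fun i _ => this i), Finset.sum_add_distrib,
      Finset.sum_sub_distrib, ← Finset.mul_sum, Finset.sum_const, Finset.card_univ,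
      Fintype.card_fin, ← Finset.sum_mul, ← Finset.mul_sum]
    push_cast
    ring
  rw [h]
  field_simp
  ring

set_option maxHeartbeats 2000000 in
private lemma hasGradient_obj {N k : ℕ} (hN : (N:ℝ) ≠ 0) (γ : ℝ)
    (winit x : Fin N → EuclideanSpace ℝ (Fin k))
    (Wk : PiLp 2 (fun _ : Fin N => EuclideanSpace ℝ (Fin k))) :
    HasGradientAt
      (fun W : PiLp 2 (fun _ : Fin N => EuclideanSpace ℝ (Fin k)) =>
        (1 / (4 * (N : ℝ))) * ∑ i : Fin N, ∑ j : Fin N, (⟪W i, x i⟫ - ⟪W j, x j⟫) ^ 2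
        + (γ / 2) * ∑ i : Fin N, ‖W i - winit i‖ ^ 2)
      ((WithLp.equiv 2 _).symm (fun i =>
        (⟪Wk i, x i⟫ - (N:ℝ)⁻¹ * ∑ j : Fin N, ⟪Wk j, x j⟫) • x i + γ • (Wk i - winit i))) Wk := by
  classical
  -- rewrite the objective
  have hrw : (fun W : PiLp 2 (fun _ : Fin N => EuclideanSpace ℝ (Fin k)) =>
        (1 / (4 * (N : ℝ))) * ∑ i : Fin N, ∑ j : Fin N, (⟪W i, x i⟫ - ⟪W j, x j⟫) ^ 2
        + (γ / 2) * ∑ i : Fin N, ‖W i - winit i‖ ^ 2)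
      = (fun W : PiLp 2 (fun _ : Fin N => EuclideanSpace ℝ (Fin k)) =>
        (1/2) * ∑ i : Fin N, ⟪W i, x i⟫ ^ 2
          - (1/(2*(N:ℝ))) * (∑ i : Fin N, ⟪W i, x i⟫) ^ 2
        + (γ / 2) * ∑ i : Fin N, ‖W i - winit i‖ ^ 2) := by
    funext W
    rw [sum_sq_pairs hN (fun i => ⟪W i, x i⟫)]
  rw [hrw, hasGradientAt_iff_hasFDerivAt]
  set P : ∀ i : Fin N, PiLp 2 (fun _ : Fin N => EuclideanSpace ℝ (Fin k)) →L[ℝ] EuclideanSpace ℝ (Fin k) := fun i => PiLp.proj 2 (fun _ : Fin N => EuclideanSpace ℝ (Fin k)) i with hP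
  set a' : Fin N → (PiLp 2 (fun _ : Fin N => EuclideanSpace ℝ (Fin k)) →L[ℝ] ℝ) := fun i => (innerSL ℝ (x i)).comp (P i) with ha'
  have ha : ∀ i, HasFDerivAt (fun W : PiLp 2 (fun _ : Fin N => EuclideanSpace ℝ (Fin k)) => ⟪W i, x i⟫) (a' i) Wk := by
    intro i
    have h2 : (fun W : PiLp 2 (fun _ : Fin N => EuclideanSpace ℝ (Fin k)) => ⟪W i, x i⟫) = fun W : PiLp 2 (fun _ : Fin N => EuclideanSpace ℝ (Fin k)) => (a' i) W := by
      funext W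
      simp only [ha', hP, ContinuousLinearMap.coe_comp', Function.comp_apply, innerSL_apply_apply,
        PiLp.proj_apply]
      exact real_inner_comm _ _
    rw [h2]
    exact (a' i).hasFDerivAt
  have hsq : ∀ i, HasFDerivAt (fun W : PiLp 2 (fun _ : Fin N => EuclideanSpace ℝ (Fin k)) => ⟪W i, x i⟫ ^ 2)
      (⟪Wk i, x i⟫ • a' i + ⟪Wk i, x i⟫ • a' i) Wk := by
    intro i
    have := (ha i).fun_mul (ha i)
    simpa [pow_two] using this
  have h1 : HasFDerivAt (fun W : PiLp 2 (fun _ : Fin N => EuclideanSpace ℝ (Fin k)) => ∑ i : Fin N, ⟪W i, x i⟫ ^ 2)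
      (∑ i : Fin N, (⟪Wk i, x i⟫ • a' i + ⟪Wk i, x i⟫ • a' i)) Wk :=
    HasFDerivAt.fun_sum (fun i _ => hsq i)
  have hs : HasFDerivAt (fun W : PiLp 2 (fun _ : Fin N => EuclideanSpace ℝ (Fin k)) => ∑ i : Fin N, ⟪W i, x i⟫)
      (∑ i : Fin N, a' i) Wk := HasFDerivAt.fun_sum (fun i _ => ha i)
  have h2 : HasFDerivAt (fun W : PiLp 2 (fun _ : Fin N => EuclideanSpace ℝ (Fin k)) => (∑ i : Fin N, ⟪W i, x i⟫) ^ 2)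
      ((∑ i : Fin N, ⟪Wk i, x i⟫) • (∑ i : Fin N, a' i)
        + (∑ i : Fin N, ⟪Wk i, x i⟫) • (∑ i : Fin N, a' i)) Wk := by
    have := hs.fun_mul hs
    simpa [pow_two] using this
  have h3 : ∀ i, HasFDerivAt (fun W : PiLp 2 (fun _ : Fin N => EuclideanSpace ℝ (Fin k)) => ‖W i - winit i‖ ^ 2)
      ((fderivInnerCLM ℝ (Wk i - winit i, Wk i - winit i)).comp ((P i).prod (P i))) Wk := by
    intro i
    have hsub : HasFDerivAt (fun W : PiLp 2 (fun _ : Fin N => EuclideanSpace ℝ (Fin k)) => W i - winit i) (P i) Wk :=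
      (P i).hasFDerivAt.sub_const (winit i)
    have := hsub.inner ℝ hsub
    have heq : (fun W : PiLp 2 (fun _ : Fin N => EuclideanSpace ℝ (Fin k)) => ‖W i - winit i‖ ^ 2)
        = fun W : PiLp 2 (fun _ : Fin N => EuclideanSpace ℝ (Fin k)) => ⟪W i - winit i, W i - winit i⟫ := by
      funext W
      rw [real_inner_self_eq_norm_sq]
    rw [heq]
    exact this
  have h3sum : HasFDerivAt (fun W : PiLp 2 (fun _ : Fin N => EuclideanSpace ℝ (Fin k)) => ∑ i : Fin N, ‖W i - winit i‖ ^ 2)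
      (∑ i : Fin N, (fderivInnerCLM ℝ (Wk i - winit i, Wk i - winit i)).comp ((P i).prod (P i)))
      Wk := HasFDerivAt.fun_sum (fun i _ => h3 i)
  have htot := ((h1.const_mul (1/2 : ℝ)).sub (h2.const_mul (1/(2*(N:ℝ))))).add
      (h3sum.const_mul (γ/2))
  have hL : (toDual ℝ (PiLp 2 (fun _ : Fin N => EuclideanSpace ℝ (Fin k)))) ((WithLp.equiv 2 _).symm (fun i =>
        (⟪Wk i, x i⟫ - (N:ℝ)⁻¹ * ∑ j : Fin N, ⟪Wk j, x j⟫) • x i + γ • (Wk i - winit i)))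
      = ((1/2 : ℝ) • (∑ i : Fin N, (⟪Wk i, x i⟫ • a' i + ⟪Wk i, x i⟫ • a' i))
          - (1/(2*(N:ℝ))) • ((∑ i : Fin N, ⟪Wk i, x i⟫) • (∑ i : Fin N, a' i)
            + (∑ i : Fin N, ⟪Wk i, x i⟫) • (∑ i : Fin N, a' i)))
        + (γ/2) • (∑ i : Fin N,
            (fderivInnerCLM ℝ (Wk i - winit i, Wk i - winit i)).comp ((P i).prod (P i))) := by
    apply ContinuousLinearMap.ext
    intro V
    rw [toDual_apply_apply, PiLp.inner_apply]
    simp only [WithLp.equiv_symm_apply, PiLp.toLp_apply, inner_add_left, real_inner_smul_left,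
      ContinuousLinearMap.add_apply, ContinuousLinearMap.coe_sub', Pi.sub_apply,
      ContinuousLinearMap.coe_smul', Pi.smul_apply, ContinuousLinearMap.coe_sum',
      Finset.sum_apply, ContinuousLinearMap.smul_apply, ContinuousLinearMap.coe_comp',
      Function.comp_apply, innerSL_apply_apply, fderivInnerCLM_apply,
      ContinuousLinearMap.prod_apply, smul_eq_mul, ha', hP, PiLp.proj_apply]
    simp only [real_inner_comm]
    simp only [sub_mul, Finset.sum_sub_distrib, Finset.sum_add_distrib, ← Finset.mul_sum]
    field_simp
    ring
  rw [hL]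
  exact htot

set_option maxHeartbeats 1000000 in
private lemma pointwise_bound {N k : ℕ} (hN0 : 0 < (N:ℝ)) (γ : ℝ)
    (winit x : Fin N → EuclideanSpace ℝ (Fin k))
    (Wk : PiLp 2 (fun _ : Fin N => EuclideanSpace ℝ (Fin k))) :
    ‖(WithLp.equiv 2 ((i : Fin N) → EuclideanSpace ℝ (Fin k))).symm (fun i =>
        (⟪Wk i, x i⟫ - (N:ℝ)⁻¹ * ∑ j : Fin N, ⟪Wk j, x j⟫) • x i + γ • (Wk i - winit i))‖^2
      ≤ ∑ i : Fin N, (4 * ‖Wk i‖^2 * ‖x i‖^4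
        + (2 * (N:ℝ)⁻¹) * ∑ j : Fin N, ‖Wk j‖^2 * (‖x i‖^4 + ‖x j‖^4)
        + 2 * γ^2 * ‖Wk i - winit i‖^2) := by
  have hN' : (N:ℝ) ≠ 0 := ne_of_gt hN0
  rw [PiLp.norm_sq_eq_of_L2]
  apply Finset.sum_le_sum
  intro i _
  set S : ℝ := ∑ j : Fin N, ⟪Wk j, x j⟫ with hS
  set cc : ℝ := ⟪Wk i, x i⟫ - (N:ℝ)⁻¹ * S with hcc
  -- norm of the i-th component
  have h1 : ‖(WithLp.equiv 2 ((i : Fin N) → EuclideanSpace ℝ (Fin k))).symm (fun i =>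
        (⟪Wk i, x i⟫ - (N:ℝ)⁻¹ * S) • x i + γ • (Wk i - winit i)) i‖
      ≤ |cc| * ‖x i‖ + |γ| * ‖Wk i - winit i‖ := by
    rw [WithLp.equiv_symm_apply, PiLp.toLp_apply]
    refine (norm_add_le _ _).trans ?_
    rw [norm_smul, norm_smul, Real.norm_eq_abs, Real.norm_eq_abs]
  have h2 : ‖(WithLp.equiv 2 ((i : Fin N) → EuclideanSpace ℝ (Fin k))).symm (fun i =>
        (⟪Wk i, x i⟫ - (N:ℝ)⁻¹ * S) • x i + γ • (Wk i - winit i)) i‖^2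
      ≤ 2 * cc^2 * ‖x i‖^2 + 2 * γ^2 * ‖Wk i - winit i‖^2 := by
    have hnn : (0:ℝ) ≤ |cc| * ‖x i‖ + |γ| * ‖Wk i - winit i‖ := by positivity
    have hsq2 : ∀ p q : ℝ, (p + q)^2 ≤ 2*p^2 + 2*q^2 := by
      intro p q; nlinarith [sq_nonneg (p - q)]
    have := (pow_le_pow_left₀ (norm_nonneg _) h1 2).trans
      (hsq2 (|cc| * ‖x i‖) (|γ| * ‖Wk i - winit i‖))
    have e1 : (|cc| * ‖x i‖)^2 = cc^2 * ‖x i‖^2 := by rw [mul_pow, sq_abs]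
    have e2 : (|γ| * ‖Wk i - winit i‖)^2 = γ^2 * ‖Wk i - winit i‖^2 := by rw [mul_pow, sq_abs]
    rw [e1, e2] at this
    linarith [this]
  refine h2.trans ?_
  -- bound cc^2
  have hSsq : S^2 ≤ (N:ℝ) * ∑ j : Fin N, ⟪Wk j, x j⟫^2 := by
    have := sq_sum_le_card_mul_sum_sq (s := (Finset.univ : Finset (Fin N)))
      (f := fun j => ⟪Wk j, x j⟫)
    simpa [hS] using this
  have hNi : (N:ℝ)⁻¹ * (N:ℝ) = 1 := inv_mul_cancel₀ hN'
  have hinv : ((N:ℝ)⁻¹ * S)^2 ≤ (N:ℝ)⁻¹ * ∑ j : Fin N, ⟪Wk j, x j⟫^2 := by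
    calc ((N:ℝ)⁻¹ * S)^2 = (N:ℝ)⁻¹ * ((N:ℝ)⁻¹ * S^2) := by ring
      _ ≤ (N:ℝ)⁻¹ * ((N:ℝ)⁻¹ * ((N:ℝ) * ∑ j : Fin N, ⟪Wk j, x j⟫^2)) := by
          gcongr
      _ = ((N:ℝ)⁻¹ * (N:ℝ)) * ((N:ℝ)⁻¹ * ∑ j : Fin N, ⟪Wk j, x j⟫^2) := by ring
      _ = (N:ℝ)⁻¹ * ∑ j : Fin N, ⟪Wk j, x j⟫^2 := by rw [hNi, one_mul]
  have hc2 : cc^2 ≤ 2 * ⟪Wk i, x i⟫^2 + 2 * (N:ℝ)⁻¹ * ∑ j : Fin N, ⟪Wk j, x j⟫^2 := by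
    nlinarith [sq_nonneg (⟪Wk i, x i⟫ + (N:ℝ)⁻¹ * S), hinv]
  have ha2 : ∀ j, ⟪Wk j, x j⟫^2 ≤ ‖Wk j‖^2 * ‖x j‖^2 := by
    intro j
    calc ⟪Wk j, x j⟫^2 = |⟪Wk j, x j⟫|^2 := (sq_abs _).symm
      _ ≤ (‖Wk j‖ * ‖x j‖)^2 :=
          pow_le_pow_left₀ (abs_nonneg _) (abs_real_inner_le_norm _ _) 2
      _ = ‖Wk j‖^2 * ‖x j‖^2 := by ring
  -- sum bound
  have hsum : (∑ j : Fin N, ⟪Wk j, x j⟫^2) * ‖x i‖^2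
      ≤ ∑ j : Fin N, ‖Wk j‖^2 * (‖x i‖^4 + ‖x j‖^4) / 2 := by
    rw [Finset.sum_mul]
    apply Finset.sum_le_sum
    intro j _
    have h4 : ‖x j‖^2 * ‖x i‖^2 ≤ (‖x i‖^4 + ‖x j‖^4) / 2 := by
      nlinarith [sq_nonneg (‖x i‖^2 - ‖x j‖^2)]
    have h5 := mul_le_mul_of_nonneg_right (ha2 j) (sq_nonneg ‖x i‖)
    have h6 := mul_le_mul_of_nonneg_left h4 (sq_nonneg ‖Wk j‖)
    nlinarith [h5, h6]
  have hxi : (0:ℝ) ≤ ‖x i‖^2 := sq_nonneg _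
  have hstep := mul_le_mul_of_nonneg_right hc2 hxi
  have hinvnn : (0:ℝ) ≤ (N:ℝ)⁻¹ := by positivity
  have hsum' := mul_le_mul_of_nonneg_left hsum (by positivity : (0:ℝ) ≤ 2 * (N:ℝ)⁻¹)
  have hii := mul_le_mul_of_nonneg_right (ha2 i) hxi
  -- combine
  have key : cc^2 * ‖x i‖^2 ≤ 2 * ‖Wk i‖^2 * ‖x i‖^4
      + (N:ℝ)⁻¹ * ∑ j : Fin N, ‖Wk j‖^2 * (‖x i‖^4 + ‖x j‖^4) := by
    calc cc^2 * ‖x i‖^2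
        ≤ (2 * ⟪Wk i, x i⟫^2 + 2 * (N:ℝ)⁻¹ * ∑ j : Fin N, ⟪Wk j, x j⟫^2) * ‖x i‖^2 := hstep
      _ = 2 * (⟪Wk i, x i⟫^2 * ‖x i‖^2)
          + 2 * (N:ℝ)⁻¹ * ((∑ j : Fin N, ⟪Wk j, x j⟫^2) * ‖x i‖^2) := by ring
      _ ≤ 2 * (‖Wk i‖^2 * ‖x i‖^2 * ‖x i‖^2)
          + 2 * (N:ℝ)⁻¹ * (∑ j : Fin N, ‖Wk j‖^2 * (‖x i‖^4 + ‖x j‖^4) / 2) := by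
          apply add_le_add
          · exact mul_le_mul_of_nonneg_left hii (by norm_num)
          · exact mul_le_mul_of_nonneg_left hsum (by positivity)
      _ = 2 * ‖Wk i‖^2 * ‖x i‖^4
          + (N:ℝ)⁻¹ * ∑ j : Fin N, ‖Wk j‖^2 * (‖x i‖^4 + ‖x j‖^4) := by
          rw [← Finset.sum_div]; ring
  linarith [h2, key]


set_option maxHeartbeats 2000000 in
/-- For noisy inputs `xᵢ = x_m + εᵢ` with `E‖x_m + εᵢ‖² ≤ √c` and `E‖x_m + εᵢ‖⁴ ≤ c`, the
expected squared Frobenius norm of the gradient of the per-sample objective `f(·, X)` at any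
`W^k` satisfies
`E‖∇_W f(W^k, X)‖_F² ≤ 8(2c + γ²)‖W^k − W*‖_F² + 8(2c + γ²)‖W*‖_F² + 4γ²‖W^init‖_F²`
for any fixed matrix `W*`. Matrices in `ℝ^{N×k}` are represented as elements of the product
`PiLp 2` space, whose norm is the Frobenius norm. -/
theorem gradient_second_moment_bound
    (N k : ℕ) (hN : 1 ≤ N)
    (γ c : ℝ) (hγ : 0 < γ) (hc : 0 < c)
    {Ω : Type*} [MeasurableSpace Ω] (μ : Measure Ω) [IsProbabilityMeasure μ]
    (xm : Ω → EuclideanSpace ℝ (Fin k))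
    (ε : Fin N → Ω → EuclideanSpace ℝ (Fin k))
    (hmeasx : Measurable xm) (hmeasε : ∀ i, Measurable (ε i))
    (hmean : ∀ i, ∫ ω, ε i ω ∂μ = 0)
    (hmom2 : ∀ i, ∫ ω, ‖xm ω + ε i ω‖ ^ 2 ∂μ ≤ Real.sqrt c)
    (hmom4 : ∀ i, ∫ ω, ‖xm ω + ε i ω‖ ^ 4 ∂μ ≤ c)
    (hint4 : ∀ i, Integrable (fun ω => ‖xm ω + ε i ω‖ ^ 4) μ)
    (winit : Fin N → EuclideanSpace ℝ (Fin k))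
    (f : PiLp 2 (fun _ : Fin N => EuclideanSpace ℝ (Fin k)) →
        (Fin N → EuclideanSpace ℝ (Fin k)) → ℝ)
    (hf : ∀ W X, f W X =
        (1 / (4 * (N : ℝ))) *
          ∑ i : Fin N, ∑ j : Fin N, (⟪W i, X i⟫ - ⟪W j, X j⟫) ^ 2
        + (γ / 2) * ∑ i : Fin N, ‖W i - winit i‖ ^ 2)
    (Winit Wk Wstar : PiLp 2 (fun _ : Fin N => EuclideanSpace ℝ (Fin k)))
    (hWinit : ∀ i, Winit i = winit i) :
    ∫ ω, ‖gradient (fun W => f W (fun i => xm ω + ε i ω)) Wk‖ ^ 2 ∂μ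
      ≤ 8 * (2 * c + γ ^ 2) * ‖Wk - Wstar‖ ^ 2
        + 8 * (2 * c + γ ^ 2) * ‖Wstar‖ ^ 2
        + 4 * γ ^ 2 * ‖Winit‖ ^ 2 := by
  have hN0 : (0:ℝ) < (N:ℝ) := by exact_mod_cast Nat.lt_of_lt_of_le Nat.zero_lt_one hN
  have hN' : (N:ℝ) ≠ 0 := ne_of_gt hN0
  set xx : Ω → Fin N → EuclideanSpace ℝ (Fin k) := fun ω i => xm ω + ε i ω with hxx
  have hint4' : ∀ i, Integrable (fun ω => ‖xx ω i‖ ^ 4) μ := fun i => hint4 i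
  have hgrad : ∀ ω, gradient (fun W => f W (fun i => xm ω + ε i ω)) Wk
      = (WithLp.equiv 2 ((i : Fin N) → EuclideanSpace ℝ (Fin k))).symm (fun i =>
        (⟪Wk i, xx ω i⟫ - (N:ℝ)⁻¹ * ∑ j : Fin N, ⟪Wk j, xx ω j⟫) • xx ω i
          + γ • (Wk i - winit i)) := by
    intro ω
    have hfun : (fun W => f W (fun i => xm ω + ε i ω))
        = fun W : PiLp 2 (fun _ : Fin N => EuclideanSpace ℝ (Fin k)) =>
          (1 / (4 * (N : ℝ))) * ∑ i : Fin N, ∑ j : Fin N,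
            (⟪W i, xx ω i⟫ - ⟪W j, xx ω j⟫) ^ 2
          + (γ / 2) * ∑ i : Fin N, ‖W i - winit i‖ ^ 2 := by
      funext W; exact hf W _
    rw [hfun]
    exact (hasGradient_obj hN' γ winit (xx ω) Wk).gradient
  set B : Ω → ℝ := fun ω => ∑ i : Fin N, (4 * ‖Wk i‖^2 * ‖xx ω i‖^4
      + (2 * (N:ℝ)⁻¹) * ∑ j : Fin N, ‖Wk j‖^2 * (‖xx ω i‖^4 + ‖xx ω j‖^4)
      + 2 * γ^2 * ‖Wk i - winit i‖^2) with hB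
  have hsumint : ∀ i : Fin N, Integrable (fun ω =>
      (2 * (N:ℝ)⁻¹) * ∑ j : Fin N, ‖Wk j‖^2 * (‖xx ω i‖^4 + ‖xx ω j‖^4)) μ := by
    intro i
    have hj : ∀ j : Fin N, Integrable (fun ω => ‖Wk j‖^2 * (‖xx ω i‖^4 + ‖xx ω j‖^4)) μ :=
      fun j => ((hint4' i).add (hint4' j)).const_mul _
    have hs : Integrable (fun ω => ∑ j : Fin N, ‖Wk j‖^2 * (‖xx ω i‖^4 + ‖xx ω j‖^4)) μ :=
      integrable_finset_sum _ fun j _ => hj j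
    exact hs.const_mul _
  have hterm : ∀ i : Fin N, Integrable (fun ω => 4 * ‖Wk i‖^2 * ‖xx ω i‖^4
      + (2 * (N:ℝ)⁻¹) * ∑ j : Fin N, ‖Wk j‖^2 * (‖xx ω i‖^4 + ‖xx ω j‖^4)
      + 2 * γ^2 * ‖Wk i - winit i‖^2) μ := by
    intro i
    have h4i : Integrable (fun ω => 4 * ‖Wk i‖^2 * ‖xx ω i‖^4) μ := (hint4' i).const_mul _
    exact (h4i.add (hsumint i)).add (integrable_const _)
  have hBint : Integrable B μ := integrable_finset_sum _ fun i _ => hterm i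
  have hptw : ∀ ω, ‖gradient (fun W => f W fun i => xm ω + ε i ω) Wk‖^2 ≤ B ω := by
    intro ω
    rw [hgrad ω]
    exact pointwise_bound hN0 γ winit (xx ω) Wk
  refine le_trans (integral_mono_of_nonneg
    (Filter.Eventually.of_forall fun ω => by positivity) hBint
    (Filter.Eventually.of_forall hptw)) ?_
  -- compute the integral of B
  have hI0 : ∀ i : Fin N, 0 ≤ ∫ ω, ‖xx ω i‖^4 ∂μ :=
    fun i => integral_nonneg fun ω => by positivity
  have hIc : ∀ i : Fin N, ∫ ω, ‖xx ω i‖^4 ∂μ ≤ c := fun i => hmom4 i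
  have hBval : ∫ ω, B ω ∂μ = ∑ i : Fin N, (4 * ‖Wk i‖^2 * (∫ ω, ‖xx ω i‖^4 ∂μ)
      + (2 * (N:ℝ)⁻¹) * ∑ j : Fin N, ‖Wk j‖^2 * ((∫ ω, ‖xx ω i‖^4 ∂μ) + (∫ ω, ‖xx ω j‖^4 ∂μ))
      + 2 * γ^2 * ‖Wk i - winit i‖^2) := by
    rw [hB, integral_finset_sum _ fun i _ => hterm i]
    refine Finset.sum_congr rfl fun i _ => ?_
    have h4i : Integrable (fun ω => 4 * ‖Wk i‖^2 * ‖xx ω i‖^4) μ := (hint4' i).const_mul _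
    have h12 : Integrable (fun ω => 4 * ‖Wk i‖^2 * ‖xx ω i‖^4
        + (2 * (N:ℝ)⁻¹) * ∑ j : Fin N, ‖Wk j‖^2 * (‖xx ω i‖^4 + ‖xx ω j‖^4)) μ :=
      h4i.add (hsumint i)
    have hj : ∀ j : Fin N, Integrable (fun ω => ‖Wk j‖^2 * (‖xx ω i‖^4 + ‖xx ω j‖^4)) μ :=
      fun j => ((hint4' i).add (hint4' j)).const_mul _
    have hinner : ∀ j : Fin N, ∫ ω, ‖Wk j‖^2 * (‖xx ω i‖^4 + ‖xx ω j‖^4) ∂μ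
        = ‖Wk j‖^2 * ((∫ ω, ‖xx ω i‖^4 ∂μ) + (∫ ω, ‖xx ω j‖^4 ∂μ)) := by
      intro j
      rw [integral_const_mul, integral_add (hint4' i) (hint4' j)]
    rw [integral_add h12 (integrable_const _),
      integral_add h4i (hsumint i),
      integral_const_mul, integral_const_mul,
      integral_finset_sum _ (fun j _ => hj j),
      Finset.sum_congr rfl (fun j _ => hinner j),
      integral_const]
    simp [measure_univ]
  rw [hBval]
  have hstep : ∀ i ∈ (Finset.univ : Finset (Fin N)),
      4 * ‖Wk i‖^2 * (∫ ω, ‖xx ω i‖^4 ∂μ)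
      + (2 * (N:ℝ)⁻¹) * ∑ j : Fin N, ‖Wk j‖^2 * ((∫ ω, ‖xx ω i‖^4 ∂μ) + (∫ ω, ‖xx ω j‖^4 ∂μ))
      + 2 * γ^2 * ‖Wk i - winit i‖^2
      ≤ 4 * ‖Wk i‖^2 * c + (2 * (N:ℝ)⁻¹) * ∑ j : Fin N, ‖Wk j‖^2 * (c + c)
      + 2 * γ^2 * ‖Wk i - winit i‖^2 := by
    intro i _
    gcongr
    · exact hIc i
    · exact hIc i
    · exact hIc _
  refine le_trans (Finset.sum_le_sum hstep) ?_
  have hcollect : ∑ i : Fin N, (4 * ‖Wk i‖^2 * c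
      + (2 * (N:ℝ)⁻¹) * ∑ j : Fin N, ‖Wk j‖^2 * (c + c)
      + 2 * γ^2 * ‖Wk i - winit i‖^2)
      = 8 * c * (∑ i : Fin N, ‖Wk i‖^2) + 2 * γ^2 * ∑ i : Fin N, ‖Wk i - winit i‖^2 := by
    rw [Finset.sum_add_distrib, Finset.sum_add_distrib, Finset.sum_const, Finset.card_univ,
      Fintype.card_fin, nsmul_eq_mul]
    rw [show ∀ z : ℝ, (∑ i : Fin N, 4 * ‖Wk i‖^2 * z) = 4 * z * ∑ i : Fin N, ‖Wk i‖^2 from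
      fun z => by rw [Finset.mul_sum]; exact Finset.sum_congr rfl fun i _ => by ring]
    rw [show (∑ j : Fin N, ‖Wk j‖^2 * (c + c)) = 2 * c * ∑ j : Fin N, ‖Wk j‖^2 from by
      rw [Finset.mul_sum]; exact Finset.sum_congr rfl fun j _ => by ring]
    rw [show (∑ i : Fin N, 2 * γ^2 * ‖Wk i - winit i‖^2)
        = 2 * γ^2 * ∑ i : Fin N, ‖Wk i - winit i‖^2 from by rw [Finset.mul_sum]]
    field_simp
    ring
  rw [hcollect]
  have hSW : (∑ i : Fin N, ‖Wk i‖^2) = ‖Wk‖^2 := (PiLp.norm_sq_eq_of_L2 _ Wk).symm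
  have hSD : (∑ i : Fin N, ‖Wk i - winit i‖^2) = ‖Wk - Winit‖^2 := by
    rw [PiLp.norm_sq_eq_of_L2]
    refine Finset.sum_congr rfl fun i _ => ?_
    rw [PiLp.sub_apply, hWinit i]
  rw [hSW, hSD]
  have t1 : ‖Wk‖ ≤ ‖Wk - Wstar‖ + ‖Wstar‖ := by
    calc ‖Wk‖ = ‖Wk - Wstar + Wstar‖ := by rw [sub_add_cancel]
      _ ≤ ‖Wk - Wstar‖ + ‖Wstar‖ := norm_add_le _ _
  have t2 : ‖Wk - Winit‖ ≤ ‖Wk‖ + ‖Winit‖ := norm_sub_le _ _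
  have t1' : ‖Wk‖^2 ≤ (‖Wk - Wstar‖ + ‖Wstar‖)^2 := pow_le_pow_left₀ (norm_nonneg _) t1 2
  have t2' : ‖Wk - Winit‖^2 ≤ (‖Wk‖ + ‖Winit‖)^2 := pow_le_pow_left₀ (norm_nonneg _) t2 2
  have hpos1 : (0:ℝ) ≤ 8 * c + 4 * γ^2 := by positivity
  have hpos2 : (0:ℝ) ≤ 2 * γ^2 := by positivity
  have u1 : (8 * c + 4 * γ^2) * ‖Wk‖^2
      ≤ (16 * c + 8 * γ^2) * ‖Wk - Wstar‖^2 + (16 * c + 8 * γ^2) * ‖Wstar‖^2 := by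
    nlinarith [mul_le_mul_of_nonneg_left t1' hpos1,
      mul_nonneg hpos1 (sq_nonneg (‖Wk - Wstar‖ - ‖Wstar‖))]
  have u2 : 2 * γ^2 * ‖Wk - Winit‖^2 ≤ 4 * γ^2 * ‖Wk‖^2 + 4 * γ^2 * ‖Winit‖^2 := by
    nlinarith [mul_le_mul_of_nonneg_left t2' hpos2,
      mul_nonneg hpos2 (sq_nonneg (‖Wk‖ - ‖Winit‖))]
  linarith [u1, u2]
end
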